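/- arXiv:2210.13038 — 10 statements merged into one kernel-verified Lean document; each statement's English description precedes it below -/
import Mathlib

section
/- The operator Φ_p acting on continuous maps f:[0,1]→[0,1] with f(0)=0 and f(1)=1, defined piecewise by Φ_p f(x) = y₁ f(x/x₁) for x∈[0,x₁], Φ_p f(x) = y₁ - (y₁-y₂) f((x-x₁)/(x₂-x₁)) for x∈[x₁,x₂], and Φ_p f(x) = y₂ + (1-y₂) f((x-x₂)/(1-x₂)) for x∈[x₂,1], is a contraction in the uniform norm with Lipschitz constant at most max(y₁, y₁-y₂, 1-y₂) < 1. -/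
open Set

/-- The zipper operator Φ_p acting on functions, defined piecewise. -/
noncomputable def zipperPhi (x₁ y₁ x₂ y₂ : ℝ) (f : ℝ → ℝ) : ℝ → ℝ := fun x =>
  if x ≤ x₁ then y₁ * f (x / x₁)
  else if x ≤ x₂ then y₁ - (y₁ - y₂) * f ((x - x₁) / (x₂ - x₁))
  else y₂ + (1 - y₂) * f ((x - x₂) / (1 - x₂))

/-- Continuous maps f : [0,1] → [0,1] with f 0 = 0 and f 1 = 1. -/
def IsC00 (f : ℝ → ℝ) : Prop :=
  ContinuousOn f (Icc 0 1) ∧ MapsTo f (Icc 0 1) (Icc 0 1) ∧ f 0 = 0 ∧ f 1 = 1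

lemma contOn_union {f : ℝ → ℝ} {s t : Set ℝ} (hs : IsClosed s) (ht : IsClosed t)
    (h1 : ContinuousOn f s) (h2 : ContinuousOn f t) : ContinuousOn f (s ∪ t) := by
  intro x hx
  have A : ContinuousWithinAt f s x := by
    by_cases h : x ∈ s
    · exact h1 x h
    · exact continuousWithinAt_of_notMem_closure (by rwa [hs.closure_eq])
  have B : ContinuousWithinAt f t x := by
    by_cases h : x ∈ t
    · exact h2 x h
    · exact continuousWithinAt_of_notMem_closure (by rwa [ht.closure_eq])
  exact A.union B

theorem zipperPhi_contraction (x₁ y₁ x₂ y₂ : ℝ)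
    (hx₁ : x₁ ∈ Ioo (0:ℝ) 1) (hy₁ : y₁ ∈ Ioo (0:ℝ) 1)
    (hx₂ : x₂ ∈ Ioo (0:ℝ) 1) (hy₂ : y₂ ∈ Ioo (0:ℝ) 1)
    (hx : x₁ < x₂) (hy : y₂ < y₁) :
    max y₁ (max (y₁ - y₂) (1 - y₂)) < 1 ∧
    (∀ f : ℝ → ℝ, IsC00 f → IsC00 (zipperPhi x₁ y₁ x₂ y₂ f)) ∧
    (∀ f g : ℝ → ℝ, IsC00 f → IsC00 g → ∀ C : ℝ, 0 ≤ C →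
      (∀ x ∈ Icc (0:ℝ) 1, |f x - g x| ≤ C) →
      ∀ x ∈ Icc (0:ℝ) 1,
        |zipperPhi x₁ y₁ x₂ y₂ f x - zipperPhi x₁ y₁ x₂ y₂ g x| ≤
          max y₁ (max (y₁ - y₂) (1 - y₂)) * C) := by
  obtain ⟨hx₁0, hx₁1⟩ := hx₁
  obtain ⟨hy₁0, hy₁1⟩ := hy₁
  obtain ⟨hx₂0, hx₂1⟩ := hx₂
  obtain ⟨hy₂0, hy₂1⟩ := hy₂
  have hx₁x₂ : (0:ℝ) < x₂ - x₁ := by linarith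
  have hx₂1' : (0:ℝ) < 1 - x₂ := by linarith
  have hM1 : max y₁ (max (y₁ - y₂) (1 - y₂)) < 1 :=
    max_lt hy₁1 (max_lt (by linarith) (by linarith))
  refine ⟨hM1, ?_, ?_⟩
  · rintro f ⟨hfc, hfm, hf0, hf1⟩
    have hΦ0 : zipperPhi x₁ y₁ x₂ y₂ f 0 = 0 := by
      simp [zipperPhi, hx₁0.le, hf0]
    have hΦ1 : zipperPhi x₁ y₁ x₂ y₂ f 1 = 1 := by
      simp only [zipperPhi, not_le.2 hx₁1, if_false, not_le.2 hx₂1,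
        div_self (by linarith : (1:ℝ) - x₂ ≠ 0), hf1]
      ring
    refine ⟨?_, ?_, hΦ0, hΦ1⟩
    · -- continuity
      have hu : Icc (0:ℝ) 1 = (Icc 0 x₁ ∪ Icc x₁ x₂) ∪ Icc x₂ 1 := by
        rw [Icc_union_Icc_eq_Icc hx₁0.le hx.le, Icc_union_Icc_eq_Icc hx₂0.le hx₂1.le]
      have c1 : ContinuousOn (zipperPhi x₁ y₁ x₂ y₂ f) (Icc 0 x₁) := by
        apply ContinuousOn.congr (f := fun x => y₁ * f (x / x₁))
        · refine continuousOn_const.mul (hfc.comp ((continuous_id.div_const x₁).continuousOn) ?_)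
          intro x hxm
          exact ⟨div_nonneg hxm.1 hx₁0.le, (div_le_one hx₁0).2 hxm.2⟩
        · intro x hxm
          simp [zipperPhi, hxm.2]
      have c2 : ContinuousOn (zipperPhi x₁ y₁ x₂ y₂ f) (Icc x₁ x₂) := by
        apply ContinuousOn.congr (f := fun x => y₁ - (y₁ - y₂) * f ((x - x₁) / (x₂ - x₁)))
        · refine continuousOn_const.sub (continuousOn_const.mul
            (hfc.comp (((continuous_id.sub continuous_const).div_const _).continuousOn) ?_))
          intro x hxm
          exact ⟨div_nonneg (by linarith [hxm.1]) hx₁x₂.le,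
            (div_le_one hx₁x₂).2 (by linarith [hxm.2])⟩
        · intro x hxm
          by_cases h : x ≤ x₁
          · have hxe : x = x₁ := le_antisymm h hxm.1
            simp [zipperPhi, hxe, div_self (ne_of_gt hx₁0), hf1, hf0,
              div_self (ne_of_gt hx₁x₂)]
          · simp [zipperPhi, h, hxm.2]
      have c3 : ContinuousOn (zipperPhi x₁ y₁ x₂ y₂ f) (Icc x₂ 1) := by
        apply ContinuousOn.congr (f := fun x => y₂ + (1 - y₂) * f ((x - x₂) / (1 - x₂)))
        · refine continuousOn_const.add (continuousOn_const.mul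
            (hfc.comp (((continuous_id.sub continuous_const).div_const _).continuousOn) ?_))
          intro x hxm
          exact ⟨div_nonneg (by linarith [hxm.1]) hx₂1'.le,
            (div_le_one hx₂1').2 (by linarith [hxm.2])⟩
        · intro x hxm
          have h1 : ¬ x ≤ x₁ := not_le.2 (lt_of_lt_of_le hx hxm.1)
          by_cases h2 : x ≤ x₂
          · have hxe : x = x₂ := le_antisymm h2 hxm.1
            subst hxe
            simp only [zipperPhi, if_neg h1, if_pos le_rfl, sub_self, zero_div, hf0,
              div_self (ne_of_gt hx₁x₂), hf1]
            ring
          · simp [zipperPhi, h1, h2]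
      rw [hu]
      exact contOn_union (isClosed_Icc.union isClosed_Icc) isClosed_Icc
        (contOn_union isClosed_Icc isClosed_Icc c1 c2) c3
    · -- maps to
      intro x hxm
      simp only [zipperPhi]
      split_ifs with h1 h2
      · have ht : x / x₁ ∈ Icc (0:ℝ) 1 := ⟨div_nonneg hxm.1 hx₁0.le, (div_le_one hx₁0).2 h1⟩
        obtain ⟨h0, h1'⟩ := hfm ht
        constructor
        · exact mul_nonneg hy₁0.le h0
        · nlinarith
      · have ht : (x - x₁) / (x₂ - x₁) ∈ Icc (0:ℝ) 1 :=
          ⟨div_nonneg (by linarith [not_le.1 h1]) hx₁x₂.le, (div_le_one hx₁x₂).2 (by linarith)⟩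
        obtain ⟨h0, h1'⟩ := hfm ht
        constructor
        · nlinarith
        · nlinarith
      · have ht : (x - x₂) / (1 - x₂) ∈ Icc (0:ℝ) 1 :=
          ⟨div_nonneg (by linarith [not_le.1 h2]) hx₂1'.le,
            (div_le_one hx₂1').2 (by linarith [hxm.2])⟩
        obtain ⟨h0, h1'⟩ := hfm ht
        constructor
        · nlinarith
        · nlinarith
  · rintro f g hf hg C hC hfg x hxm
    have hMy₁ : y₁ ≤ max y₁ (max (y₁ - y₂) (1 - y₂)) := le_max_left _ _
    have hMd : y₁ - y₂ ≤ max y₁ (max (y₁ - y₂) (1 - y₂)) :=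
      le_trans (le_max_left _ _) (le_max_right _ _)
    have hMe : 1 - y₂ ≤ max y₁ (max (y₁ - y₂) (1 - y₂)) :=
      le_trans (le_max_right _ _) (le_max_right _ _)
    simp only [zipperPhi]
    split_ifs with h1 h2
    · have ht : x / x₁ ∈ Icc (0:ℝ) 1 := ⟨div_nonneg hxm.1 hx₁0.le, (div_le_one hx₁0).2 h1⟩
      calc |y₁ * f (x / x₁) - y₁ * g (x / x₁)| = y₁ * |f (x / x₁) - g (x / x₁)| := by
            rw [← mul_sub, abs_mul, abs_of_nonneg hy₁0.le]
        _ ≤ y₁ * C := mul_le_mul_of_nonneg_left (hfg _ ht) hy₁0.le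
        _ ≤ _ := mul_le_mul_of_nonneg_right hMy₁ hC
    · have ht : (x - x₁) / (x₂ - x₁) ∈ Icc (0:ℝ) 1 :=
        ⟨div_nonneg (by linarith [not_le.1 h1]) hx₁x₂.le, (div_le_one hx₁x₂).2 (by linarith)⟩
      set t := (x - x₁) / (x₂ - x₁)
      calc |(y₁ - (y₁ - y₂) * f t) - (y₁ - (y₁ - y₂) * g t)|
          = (y₁ - y₂) * |f t - g t| := by
            rw [show (y₁ - (y₁ - y₂) * f t) - (y₁ - (y₁ - y₂) * g t)
                = (y₁ - y₂) * (g t - f t) by ring, abs_mul,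
              abs_of_nonneg (by linarith : (0:ℝ) ≤ y₁ - y₂), abs_sub_comm]
        _ ≤ (y₁ - y₂) * C := mul_le_mul_of_nonneg_left (hfg _ ht) (by linarith)
        _ ≤ _ := mul_le_mul_of_nonneg_right hMd hC
    · have ht : (x - x₂) / (1 - x₂) ∈ Icc (0:ℝ) 1 :=
        ⟨div_nonneg (by linarith [not_le.1 h2]) hx₂1'.le,
          (div_le_one hx₂1').2 (by linarith [hxm.2])⟩
      set t := (x - x₂) / (1 - x₂)
      calc |(y₂ + (1 - y₂) * f t) - (y₂ + (1 - y₂) * g t)|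
          = (1 - y₂) * |f t - g t| := by
            rw [show (y₂ + (1 - y₂) * f t) - (y₂ + (1 - y₂) * g t)
                = (1 - y₂) * (f t - g t) by ring, abs_mul,
              abs_of_nonneg (by linarith : (0:ℝ) ≤ 1 - y₂)]
        _ ≤ (1 - y₂) * C := mul_le_mul_of_nonneg_left (hfg _ ht) (by linarith)
        _ ≤ _ := mul_le_mul_of_nonneg_right hMe hC
end

section
/- The operator Φ_p has a unique fixed point Z_p in the space of continuous maps f:[0,1]→[0,1] with f(0)=0 and f(1)=1 (endowed with the supremum metric), called the zipper map of parameter p. -/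
open Set

namespace ZipAux

noncomputable def pr (x : ℝ) : Icc (0:ℝ) 1 := projIcc 0 1 zero_le_one x

lemma pr_of_mem {x : ℝ} (hx : x ∈ Icc (0:ℝ) 1) : pr x = ⟨x, hx⟩ :=
  projIcc_of_mem zero_le_one hx

def pt0 : Icc (0:ℝ) 1 := ⟨0, left_mem_Icc.2 zero_le_one⟩
def pt1 : Icc (0:ℝ) 1 := ⟨1, right_mem_Icc.2 zero_le_one⟩

lemma pr_zero : pr 0 = pt0 := pr_of_mem (left_mem_Icc.2 zero_le_one)
lemma pr_one : pr 1 = pt1 := pr_of_mem (right_mem_Icc.2 zero_le_one)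

noncomputable def ext01 (f : C(Icc (0:ℝ) 1, ℝ)) : ℝ → ℝ := fun x => f (pr x)

lemma ext01_cont (f : C(Icc (0:ℝ) 1, ℝ)) : Continuous (ext01 f) := by
  unfold ext01 pr
  exact f.continuous.comp continuous_projIcc

/-- The subset of C([0,1],ℝ) corresponding to C⁰₀. -/
def S : Set C(Icc (0:ℝ) 1, ℝ) :=
  {f | (∀ t, f t ∈ Icc (0:ℝ) 1) ∧ f pt0 = 0 ∧ f pt1 = 1}

lemma S_closed : IsClosed S := by
  have h1 : IsClosed {f : C(Icc (0:ℝ) 1, ℝ) | ∀ t, f t ∈ Icc (0:ℝ) 1} := by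
    have : {f : C(Icc (0:ℝ) 1, ℝ) | ∀ t, f t ∈ Icc (0:ℝ) 1}
        = ⋂ t, (fun f : C(Icc (0:ℝ) 1, ℝ) => f t) ⁻¹' (Icc 0 1) := by ext f; simp
    rw [this]
    exact isClosed_iInter fun t =>
      isClosed_Icc.preimage (continuous_eval_const t)
  have h2 : IsClosed {f : C(Icc (0:ℝ) 1, ℝ) | f pt0 = 0} :=
    isClosed_singleton.preimage (continuous_eval_const pt0)
  have h3 : IsClosed {f : C(Icc (0:ℝ) 1, ℝ) | f pt1 = 1} :=
    isClosed_singleton.preimage (continuous_eval_const pt1)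
  have : S = {f : C(Icc (0:ℝ) 1, ℝ) | ∀ t, f t ∈ Icc (0:ℝ) 1}
      ∩ ({f | f pt0 = 0} ∩ {f | f pt1 = 1}) := by
    ext f; simp [S, and_assoc]
  rw [this]
  exact h1.inter (h2.inter h3)

section Params

variable {x₁ y₁ x₂ y₂ : ℝ}

lemma zipperPhi_eqOn (hx₁ : 0 < x₁) (h12 : x₁ < x₂) (hx₂ : x₂ < 1) {f g : ℝ → ℝ}
    (h : EqOn f g (Icc 0 1)) :
    EqOn (zipperPhi x₁ y₁ x₂ y₂ f) (zipperPhi x₁ y₁ x₂ y₂ g) (Icc 0 1) := by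
  intro x hx
  unfold zipperPhi
  split_ifs with h1 h2
  · rw [h ⟨div_nonneg hx.1 hx₁.le, (div_le_one hx₁).2 h1⟩]
  · push_neg at h1
    rw [h ⟨div_nonneg (by linarith) (by linarith), (div_le_one (by linarith)).2 (by linarith)⟩]
  · push_neg at h1 h2
    rw [h ⟨div_nonneg (by linarith) (by linarith),
      (div_le_one (by linarith)).2 (by linarith [hx.2])⟩]

lemma Tfun_cont (hx₁ : 0 < x₁) (h12 : x₁ < x₂) (hx₂ : x₂ < 1)
    (f : C(Icc (0:ℝ) 1, ℝ)) (hf0 : f pt0 = 0) (hf1 : f pt1 = 1) :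
    Continuous (zipperPhi x₁ y₁ x₂ y₂ (ext01 f)) := by
  unfold zipperPhi
  have hc1 : Continuous fun x : ℝ => y₁ * ext01 f (x / x₁) :=
    continuous_const.mul ((ext01_cont f).comp (continuous_id.div_const x₁))
  have hc2 : Continuous fun x : ℝ => y₁ - (y₁ - y₂) * ext01 f ((x - x₁) / (x₂ - x₁)) :=
    continuous_const.sub (continuous_const.mul ((ext01_cont f).comp
      ((continuous_id.sub continuous_const).div_const _)))
  have hc3 : Continuous fun x : ℝ => y₂ + (1 - y₂) * ext01 f ((x - x₂) / (1 - x₂)) :=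
    continuous_const.add (continuous_const.mul ((ext01_cont f).comp
      ((continuous_id.sub continuous_const).div_const _)))
  apply Continuous.if_le _ _ continuous_id continuous_const
  · intro x hxx
    simp only [id_eq] at hxx
    rw [hxx, if_pos h12.le]
    simp [ext01, div_self hx₁.ne', sub_self, zero_div, pr_zero, pr_one, hf0, hf1]
  · exact hc1
  · apply Continuous.if_le hc2 hc3 continuous_id continuous_const
    intro x hxx
    simp only [id_eq] at hxx
    have hne : x₂ - x₁ ≠ 0 := by linarith
    rw [hxx]
    simp [ext01, div_self hne, sub_self, zero_div, pr_zero, pr_one, hf0, hf1]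

end Params

end ZipAux

open ZipAux in
/-- Φ_p has a unique fixed point Z_p in C⁰₀, the zipper map of parameter p. -/
theorem zipperPhi_unique_fixed_point (x₁ y₁ x₂ y₂ : ℝ)
    (hx₁ : x₁ ∈ Ioo (0:ℝ) 1) (hy₁ : y₁ ∈ Ioo (0:ℝ) 1)
    (hx₂ : x₂ ∈ Ioo (0:ℝ) 1) (hy₂ : y₂ ∈ Ioo (0:ℝ) 1)
    (hx : x₁ < x₂) (hy : y₂ < y₁) :
    ∃ Z : ℝ → ℝ, IsC00 Z ∧ EqOn (zipperPhi x₁ y₁ x₂ y₂ Z) Z (Icc 0 1) ∧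
      ∀ Z' : ℝ → ℝ, IsC00 Z' → EqOn (zipperPhi x₁ y₁ x₂ y₂ Z') Z' (Icc 0 1) →
        EqOn Z' Z (Icc 0 1) := by
  obtain ⟨hx10, hx11⟩ := hx₁
  obtain ⟨hy10, hy11⟩ := hy₁
  obtain ⟨hx20, hx21⟩ := hx₂
  obtain ⟨hy20, hy21⟩ := hy₂
  -- the contraction on the subtype S
  haveI : CompleteSpace ↥S := S_closed.completeSpace_coe
  -- T maps S to S
  have hTval : ∀ f : C(Icc (0:ℝ) 1, ℝ), f ∈ S →
      ∀ t : Icc (0:ℝ) 1, zipperPhi x₁ y₁ x₂ y₂ (ext01 f) t ∈ Icc (0:ℝ) 1 := by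
    intro f hf t
    obtain ⟨hmem, hf0, hf1⟩ := hf
    unfold zipperPhi
    split_ifs with h1 h2 <;> simp only [ext01, mem_Icc]
    · obtain ⟨ha, hb⟩ := hmem (pr (t / x₁))
      constructor
      · nlinarith
      · nlinarith
    · obtain ⟨ha, hb⟩ := hmem (pr ((t - x₁) / (x₂ - x₁)))
      constructor
      · nlinarith
      · nlinarith
    · obtain ⟨ha, hb⟩ := hmem (pr ((t - x₂) / (1 - x₂)))
      constructor
      · nlinarith
      · nlinarith
  have hT0 : ∀ f : C(Icc (0:ℝ) 1, ℝ), f ∈ S →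
      zipperPhi x₁ y₁ x₂ y₂ (ext01 f) (0:ℝ) = 0 := by
    intro f hf
    obtain ⟨_, hf0, _⟩ := hf
    unfold zipperPhi
    rw [if_pos hx10.le]
    simp [ext01, zero_div, pr_zero, hf0]
  have hT1 : ∀ f : C(Icc (0:ℝ) 1, ℝ), f ∈ S →
      zipperPhi x₁ y₁ x₂ y₂ (ext01 f) (1:ℝ) = 1 := by
    intro f hf
    obtain ⟨_, _, hf1⟩ := hf
    unfold zipperPhi
    rw [if_neg (by linarith), if_neg (by linarith)]
    have : (1 - x₂) / (1 - x₂) = 1 := div_self (by linarith)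
    rw [this]
    simp [ext01, pr_one, hf1]
  -- build T : S → S
  let T : ↥S → ↥S := fun f =>
    ⟨⟨fun t => zipperPhi x₁ y₁ x₂ y₂ (ext01 f.1) t,
      (Tfun_cont hx10 hx hx21 f.1 f.2.2.1 f.2.2.2).comp continuous_subtype_val⟩,
      by
        refine ⟨fun t => hTval f.1 f.2 t, ?_, ?_⟩
        · exact hT0 f.1 f.2
        · exact hT1 f.1 f.2⟩
  -- contraction constant
  set k : ℝ := max y₁ (max (y₁ - y₂) (1 - y₂)) with hk
  have hk0 : 0 ≤ k := le_trans hy10.le (le_max_left _ _)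
  have hk1 : k < 1 := by
    apply max_lt hy11
    apply max_lt <;> linarith
  let K : NNReal := ⟨k, hk0⟩
  have hcontr : ContractingWith K T := by
    constructor
    · exact_mod_cast hk1
    · apply LipschitzWith.of_dist_le_mul
      intro f g
      rw [Subtype.dist_eq]
      have hKd : (0:ℝ) ≤ (K : ℝ) * dist f g := mul_nonneg hk0 dist_nonneg
      rw [ContinuousMap.dist_le hKd]
      intro t
      have key : ∀ u : ℝ, dist (ext01 f.1 u) (ext01 g.1 u) ≤ dist f g := by
        intro u
        calc dist (ext01 f.1 u) (ext01 g.1 u) ≤ dist f.1 g.1 :=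
              ContinuousMap.dist_apply_le_dist _
          _ = dist f g := (Subtype.dist_eq f g).symm
      show dist (zipperPhi x₁ y₁ x₂ y₂ (ext01 f.1) t) (zipperPhi x₁ y₁ x₂ y₂ (ext01 g.1) t)
          ≤ (K : ℝ) * dist f g
      unfold zipperPhi
      split_ifs
      · rw [Real.dist_eq, ← mul_sub, abs_mul, abs_of_nonneg hy10.le]
        calc y₁ * |ext01 f.1 (↑t / x₁) - ext01 g.1 (↑t / x₁)|
            ≤ y₁ * dist f g := by
              apply mul_le_mul_of_nonneg_left _ hy10.le
              rw [← Real.dist_eq]; exact key _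
          _ ≤ (K : ℝ) * dist f g := by
              apply mul_le_mul_of_nonneg_right _ dist_nonneg
              exact le_max_left _ _
      · rw [Real.dist_eq]
        have : y₁ - (y₁ - y₂) * ext01 f.1 ((↑t - x₁) / (x₂ - x₁))
            - (y₁ - (y₁ - y₂) * ext01 g.1 ((↑t - x₁) / (x₂ - x₁)))
            = -((y₁ - y₂) * (ext01 f.1 ((↑t - x₁) / (x₂ - x₁))
              - ext01 g.1 ((↑t - x₁) / (x₂ - x₁)))) := by ring
        rw [this, abs_neg, abs_mul, abs_of_nonneg (by linarith : (0:ℝ) ≤ y₁ - y₂)]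
        calc (y₁ - y₂) * |ext01 f.1 ((↑t - x₁) / (x₂ - x₁)) - ext01 g.1 ((↑t - x₁) / (x₂ - x₁))|
            ≤ (y₁ - y₂) * dist f g := by
              apply mul_le_mul_of_nonneg_left _ (by linarith)
              rw [← Real.dist_eq]; exact key _
          _ ≤ (K : ℝ) * dist f g := by
              apply mul_le_mul_of_nonneg_right _ dist_nonneg
              exact le_trans (le_max_left _ _) (le_max_right _ _)
      · rw [Real.dist_eq]
        have : y₂ + (1 - y₂) * ext01 f.1 ((↑t - x₂) / (1 - x₂))
            - (y₂ + (1 - y₂) * ext01 g.1 ((↑t - x₂) / (1 - x₂)))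
            = (1 - y₂) * (ext01 f.1 ((↑t - x₂) / (1 - x₂))
              - ext01 g.1 ((↑t - x₂) / (1 - x₂))) := by ring
        rw [this, abs_mul, abs_of_nonneg (by linarith : (0:ℝ) ≤ 1 - y₂)]
        calc (1 - y₂) * |ext01 f.1 ((↑t - x₂) / (1 - x₂)) - ext01 g.1 ((↑t - x₂) / (1 - x₂))|
            ≤ (1 - y₂) * dist f g := by
              apply mul_le_mul_of_nonneg_left _ (by linarith)
              rw [← Real.dist_eq]; exact key _
          _ ≤ (K : ℝ) * dist f g := by
              apply mul_le_mul_of_nonneg_right _ dist_nonneg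
              exact le_trans (le_max_right _ _) (le_max_right _ _)
  -- nonempty: the identity function
  haveI : Nonempty ↥S := ⟨⟨⟨fun t => (t : ℝ), continuous_subtype_val⟩,
    fun t => t.2, rfl, rfl⟩⟩
  -- the fixed point
  set fp : ↥S := hcontr.fixedPoint T with hfp
  have hfix : T fp = fp := hcontr.fixedPoint_isFixedPt
  -- the zipper map
  refine ⟨ext01 fp.1, ?_, ?_, ?_⟩
  · refine ⟨((ext01_cont fp.1)).continuousOn, ?_, ?_, ?_⟩
    · intro u hu
      exact fp.2.1 _
    · show fp.1 (pr 0) = 0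
      rw [pr_zero]; exact fp.2.2.1
    · show fp.1 (pr 1) = 1
      rw [pr_one]; exact fp.2.2.2
  · -- fixed point equation
    intro u hu
    have h1 : (T fp).1 ⟨u, hu⟩ = fp.1 ⟨u, hu⟩ := by rw [hfix]
    have h2 : (T fp).1 ⟨u, hu⟩ = zipperPhi x₁ y₁ x₂ y₂ (ext01 fp.1) u := rfl
    calc zipperPhi x₁ y₁ x₂ y₂ (ext01 fp.1) u = fp.1 ⟨u, hu⟩ := by rw [← h2, h1]
      _ = fp.1 (pr u) := by rw [pr_of_mem hu]
      _ = ext01 fp.1 u := rfl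
  · -- uniqueness
    intro Z' hZ' hZfix
    obtain ⟨hcont, hmaps, hz0, hz1⟩ := hZ'
    -- the restriction of Z' to [0,1] as a continuous map
    let z : C(Icc (0:ℝ) 1, ℝ) := ⟨fun t => Z' t, hcont.restrict⟩
    have hzS : z ∈ S := by
      refine ⟨fun t => hmaps t.2, ?_, ?_⟩
      · show Z' (0:ℝ) = 0; exact hz0
      · show Z' (1:ℝ) = 1; exact hz1
    have hext : EqOn (ext01 z) Z' (Icc 0 1) := by
      intro u hu
      show z (pr u) = Z' u
      rw [pr_of_mem hu]
      rfl
    have hzfix : T ⟨z, hzS⟩ = ⟨z, hzS⟩ := by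
      apply Subtype.ext
      apply ContinuousMap.ext
      intro t
      show zipperPhi x₁ y₁ x₂ y₂ (ext01 z) t = Z' t
      calc zipperPhi x₁ y₁ x₂ y₂ (ext01 z) t
          = zipperPhi x₁ y₁ x₂ y₂ Z' t := zipperPhi_eqOn hx10 hx hx21 hext t.2
        _ = Z' t := hZfix t.2
    have h5 : (⟨z, hzS⟩ : ↥S) = fp := hcontr.fixedPoint_unique' hzfix hfix
    have hzfp : z = fp.1 := congrArg Subtype.val h5
    intro u hu
    calc Z' u = ext01 z u := (hext hu).symm
      _ = z (pr u) := rfl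
      _ = fp.1 (pr u) := by rw [hzfp]
      _ = ext01 fp.1 u := rfl
end

section
/- If f ∈ C⁰₀ is α-Hölder with constant Hol_α(f), then Φ_p f is α-Hölder with Hol_α(Φ_p f) ≤ max( λ_max(α)·Hol_α(f), (x₂-x₁)^{-α} ), where λ_max(α) = max( y₁/x₁^α, (y₁-y₂)/(x₂-x₁)^α, (1-y₂)/(1-x₂)^α ). -/
open Set

lemma holder_scaled (f : ℝ → ℝ) (H α : ℝ)
    (hH : ∀ x ∈ Icc (0:ℝ) 1, ∀ y ∈ Icc (0:ℝ) 1, |f x - f y| ≤ H * |x - y| ^ α)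
    (a b : ℝ) (hab : a < b) {x y : ℝ} (hx : x ∈ Icc a b) (hy : y ∈ Icc a b) :
    |f ((x - a) / (b - a)) - f ((y - a) / (b - a))| ≤ H * |x - y| ^ α / (b - a) ^ α := by
  have hba : (0:ℝ) < b - a := sub_pos.2 hab
  have hu : (x - a) / (b - a) ∈ Icc (0:ℝ) 1 :=
    ⟨div_nonneg (by linarith [hx.1]) hba.le, (div_le_one hba).2 (by linarith [hx.2])⟩
  have hv : (y - a) / (b - a) ∈ Icc (0:ℝ) 1 :=
    ⟨div_nonneg (by linarith [hy.1]) hba.le, (div_le_one hba).2 (by linarith [hy.2])⟩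
  have h := hH _ hu _ hv
  have heq : (x - a) / (b - a) - (y - a) / (b - a) = (x - y) / (b - a) := by ring
  rw [heq, abs_div, abs_of_pos hba, Real.div_rpow (abs_nonneg _) hba.le] at h
  rw [mul_div_assoc]
  exact h

set_option maxHeartbeats 1000000 in
/-- If f ∈ C⁰₀ is α-Hölder with constant H, then Φ_p f is α-Hölder with constant
at most max(λ_max(α)·H, (x₂-x₁)^{-α}). -/
theorem zipperPhi_holder (x₁ y₁ x₂ y₂ : ℝ)
    (hx₁ : x₁ ∈ Ioo (0:ℝ) 1) (hy₁ : y₁ ∈ Ioo (0:ℝ) 1)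
    (hx₂ : x₂ ∈ Ioo (0:ℝ) 1) (hy₂ : y₂ ∈ Ioo (0:ℝ) 1)
    (hx : x₁ < x₂) (hy : y₂ < y₁)
    (α : ℝ) (hα : α ∈ Ioc (0:ℝ) 1)
    (f : ℝ → ℝ) (hf : IsC00 f) (H : ℝ)
    (hH : ∀ x ∈ Icc (0:ℝ) 1, ∀ y ∈ Icc (0:ℝ) 1, |f x - f y| ≤ H * |x - y| ^ α) :
    ∀ x ∈ Icc (0:ℝ) 1, ∀ y ∈ Icc (0:ℝ) 1,
      |zipperPhi x₁ y₁ x₂ y₂ f x - zipperPhi x₁ y₁ x₂ y₂ f y| ≤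
        max ((max (y₁ / x₁ ^ α) (max ((y₁ - y₂) / (x₂ - x₁) ^ α) ((1 - y₂) / (1 - x₂) ^ α))) * H)
            ((x₂ - x₁) ^ (-α)) * |x - y| ^ α := by
  obtain ⟨hx10, hx11⟩ := hx₁
  obtain ⟨hy10, hy11⟩ := hy₁
  obtain ⟨hx20, hx21⟩ := hx₂
  obtain ⟨hy20, hy21⟩ := hy₂
  obtain ⟨hα0, hα1⟩ := hα
  obtain ⟨hfc, hfm, hf0, hf1⟩ := hf
  have hH1 : (1:ℝ) ≤ H := by
    have h := hH 1 (by norm_num) 0 (by norm_num)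
    rw [hf0, hf1] at h
    simpa using h
  have hH0 : (0:ℝ) ≤ H := by linarith
  set lam := max (y₁ / x₁ ^ α) (max ((y₁ - y₂) / (x₂ - x₁) ^ α) ((1 - y₂) / (1 - x₂) ^ α))
    with hlamdef
  set L := max (lam * H) ((x₂ - x₁) ^ (-α)) with hLdef
  set Φ := zipperPhi x₁ y₁ x₂ y₂ f with hΦ
  have hd : (0:ℝ) < x₂ - x₁ := by linarith
  have he : (0:ℝ) < 1 - x₂ := by linarith
  have hx1p : (0:ℝ) < x₁ ^ α := Real.rpow_pos_of_pos hx10 α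
  have hdp : (0:ℝ) < (x₂ - x₁) ^ α := Real.rpow_pos_of_pos hd α
  have hep : (0:ℝ) < (1 - x₂) ^ α := Real.rpow_pos_of_pos he α
  have hlam1 : y₁ / x₁ ^ α ≤ lam := le_max_left _ _
  have hlam2 : (y₁ - y₂) / (x₂ - x₁) ^ α ≤ lam :=
    le_trans (le_max_left _ _) (le_max_right _ _)
  have hlam3 : (1 - y₂) / (1 - x₂) ^ α ≤ lam :=
    le_trans (le_max_right _ _) (le_max_right _ _)
  have hlam0 : (0:ℝ) ≤ lam := le_trans (by positivity) hlam1
  -- piece formulas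
  have hP1 : ∀ z, z ≤ x₁ → Φ z = y₁ * f (z / x₁) := by
    intro z h; simp [hΦ, zipperPhi, h]
  have hP2 : ∀ z, x₁ < z → z ≤ x₂ → Φ z = y₁ - (y₁ - y₂) * f ((z - x₁) / (x₂ - x₁)) := by
    intro z h h2; simp [hΦ, zipperPhi, not_le.2 h, h2]
  have hP3 : ∀ z, x₂ < z → Φ z = y₂ + (1 - y₂) * f ((z - x₂) / (1 - x₂)) := by
    intro z h; simp [hΦ, zipperPhi, not_le.2 h, not_le.2 (lt_trans hx h)]
  -- range facts
  have hr1 : ∀ z, 0 ≤ z → z ≤ x₁ → Φ z ∈ Icc 0 y₁ := by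
    intro z h0 h1
    have hfu := hfm (⟨div_nonneg h0 hx10.le, (div_le_one hx10).2 h1⟩ : z / x₁ ∈ Icc (0:ℝ) 1)
    rw [hP1 z h1]
    constructor
    · exact mul_nonneg hy10.le hfu.1
    · calc y₁ * f (z / x₁) ≤ y₁ * 1 := mul_le_mul_of_nonneg_left hfu.2 hy10.le
        _ = y₁ := mul_one _
  have hr2 : ∀ z, x₁ < z → z ≤ x₂ → Φ z ∈ Icc y₂ y₁ := by
    intro z h1 h2
    have hfu := hfm (⟨div_nonneg (by linarith) hd.le, (div_le_one hd).2 (by linarith)⟩ :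
      (z - x₁) / (x₂ - x₁) ∈ Icc (0:ℝ) 1)
    rw [hP2 z h1 h2]
    constructor
    · nlinarith [hfu.2]
    · nlinarith [hfu.1]
  have hr3 : ∀ z, x₂ < z → z ≤ 1 → Φ z ∈ Icc y₂ 1 := by
    intro z h1 h2
    have hfu := hfm (⟨div_nonneg (by linarith) he.le, (div_le_one he).2 (by linarith)⟩ :
      (z - x₂) / (1 - x₂) ∈ Icc (0:ℝ) 1)
    rw [hP3 z h1]
    constructor
    · nlinarith [hfu.1]
    · nlinarith [hfu.2]
  -- endpoint Hölder bounds
  have hb1 : ∀ z, 0 ≤ z → z ≤ x₁ → y₁ - Φ z ≤ y₁ / x₁ ^ α * H * (x₁ - z) ^ α := by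
    intro z h0 h1
    have h := holder_scaled f H α hH 0 x₁ hx10 (x := z) (y := x₁) ⟨h0, h1⟩ ⟨hx10.le, le_refl _⟩
    simp only [sub_zero] at h
    rw [div_self (ne_of_gt hx10), hf1] at h
    have habs : |z - x₁| = x₁ - z := by rw [abs_sub_comm]; exact abs_of_nonneg (by linarith)
    rw [habs] at h
    rw [hP1 z h1]
    have h2 : 1 - f (z / x₁) ≤ H * (x₁ - z) ^ α / x₁ ^ α := by
      calc 1 - f (z / x₁) ≤ |1 - f (z / x₁)| := le_abs_self _
        _ = |f (z / x₁) - 1| := abs_sub_comm _ _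
        _ ≤ _ := h
    calc y₁ - y₁ * f (z / x₁) = y₁ * (1 - f (z / x₁)) := by ring
      _ ≤ y₁ * (H * (x₁ - z) ^ α / x₁ ^ α) := mul_le_mul_of_nonneg_left h2 hy10.le
      _ = y₁ / x₁ ^ α * H * (x₁ - z) ^ α := by ring
  have hb2a : ∀ z, x₁ < z → z ≤ x₂ →
      y₁ - Φ z ≤ (y₁ - y₂) / (x₂ - x₁) ^ α * H * (z - x₁) ^ α := by
    intro z h1 h2
    have h := holder_scaled f H α hH x₁ x₂ hx (x := z) (y := x₁) ⟨h1.le, h2⟩ ⟨le_refl _, hx.le⟩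
    rw [sub_self, zero_div, hf0, sub_zero] at h
    have habs : |z - x₁| = z - x₁ := abs_of_nonneg (by linarith)
    rw [habs] at h
    rw [hP2 z h1 h2]
    have h2' : f ((z - x₁) / (x₂ - x₁)) ≤ H * (z - x₁) ^ α / (x₂ - x₁) ^ α :=
      le_trans (le_abs_self _) h
    calc y₁ - (y₁ - (y₁ - y₂) * f ((z - x₁) / (x₂ - x₁)))
        = (y₁ - y₂) * f ((z - x₁) / (x₂ - x₁)) := by ring
      _ ≤ (y₁ - y₂) * (H * (z - x₁) ^ α / (x₂ - x₁) ^ α) :=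
          mul_le_mul_of_nonneg_left h2' (by linarith)
      _ = (y₁ - y₂) / (x₂ - x₁) ^ α * H * (z - x₁) ^ α := by ring
  have hb2b : ∀ z, x₁ < z → z ≤ x₂ →
      Φ z - y₂ ≤ (y₁ - y₂) / (x₂ - x₁) ^ α * H * (x₂ - z) ^ α := by
    intro z h1 h2
    have h := holder_scaled f H α hH x₁ x₂ hx (x := z) (y := x₂) ⟨h1.le, h2⟩ ⟨hx.le, le_refl _⟩
    rw [div_self (ne_of_gt hd), hf1] at h
    have habs : |z - x₂| = x₂ - z := by rw [abs_sub_comm]; exact abs_of_nonneg (by linarith)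
    rw [habs] at h
    rw [hP2 z h1 h2]
    have h2' : 1 - f ((z - x₁) / (x₂ - x₁)) ≤ H * (x₂ - z) ^ α / (x₂ - x₁) ^ α := by
      calc 1 - f ((z - x₁) / (x₂ - x₁)) ≤ |1 - f ((z - x₁) / (x₂ - x₁))| := le_abs_self _
        _ = |f ((z - x₁) / (x₂ - x₁)) - 1| := abs_sub_comm _ _
        _ ≤ _ := h
    calc y₁ - (y₁ - y₂) * f ((z - x₁) / (x₂ - x₁)) - y₂
        = (y₁ - y₂) * (1 - f ((z - x₁) / (x₂ - x₁))) := by ring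
      _ ≤ (y₁ - y₂) * (H * (x₂ - z) ^ α / (x₂ - x₁) ^ α) :=
          mul_le_mul_of_nonneg_left h2' (by linarith)
      _ = (y₁ - y₂) / (x₂ - x₁) ^ α * H * (x₂ - z) ^ α := by ring
  have hb3 : ∀ z, x₂ < z → z ≤ 1 →
      Φ z - y₂ ≤ (1 - y₂) / (1 - x₂) ^ α * H * (z - x₂) ^ α := by
    intro z h1 h2
    have h := holder_scaled f H α hH x₂ 1 hx21 (x := z) (y := x₂) ⟨h1.le, h2⟩
      ⟨le_refl _, hx21.le⟩
    rw [sub_self, zero_div, hf0, sub_zero] at h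
    have habs : |z - x₂| = z - x₂ := abs_of_nonneg (by linarith)
    rw [habs] at h
    rw [hP3 z h1]
    have h2' : f ((z - x₂) / (1 - x₂)) ≤ H * (z - x₂) ^ α / (1 - x₂) ^ α :=
      le_trans (le_abs_self _) h
    calc y₂ + (1 - y₂) * f ((z - x₂) / (1 - x₂)) - y₂
        = (1 - y₂) * f ((z - x₂) / (1 - x₂)) := by ring
      _ ≤ (1 - y₂) * (H * (z - x₂) ^ α / (1 - x₂) ^ α) :=
          mul_le_mul_of_nonneg_left h2' (by linarith)
      _ = (1 - y₂) / (1 - x₂) ^ α * H * (z - x₂) ^ α := by ring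
  -- the main step lemma
  have bump : ∀ c : ℝ, c ≤ lam → ∀ s t : ℝ, 0 ≤ s → s ≤ t →
      c * H * s ^ α ≤ L * t ^ α := by
    intro c hcl s t hs hst
    calc c * H * s ^ α ≤ lam * H * s ^ α :=
          mul_le_mul_of_nonneg_right (mul_le_mul_of_nonneg_right hcl hH0)
            (Real.rpow_nonneg hs α)
      _ ≤ lam * H * t ^ α :=
          mul_le_mul_of_nonneg_left (Real.rpow_le_rpow hs hst hα0.le)
            (mul_nonneg hlam0 hH0)
      _ ≤ L * t ^ α :=
          mul_le_mul_of_nonneg_right (le_max_left _ _) (Real.rpow_nonneg (hs.trans hst) α)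
  have key : ∀ x ∈ Icc (0:ℝ) 1, ∀ y ∈ Icc (0:ℝ) 1, x ≤ y →
      |Φ x - Φ y| ≤ L * |x - y| ^ α := by
    intro x hx' y hy' hxy
    have habs : |x - y| = y - x := by
      rw [abs_sub_comm]; exact abs_of_nonneg (by linarith)
    rcases le_or_gt y x₁ with hy1 | hy1
    · -- both in piece 1
      have hx1 : x ≤ x₁ := hxy.trans hy1
      have h := holder_scaled f H α hH 0 x₁ hx10 (x := x) (y := y) ⟨hx'.1, hx1⟩ ⟨hy'.1, hy1⟩
      simp only [sub_zero] at h
      calc |Φ x - Φ y| = y₁ * |f (x / x₁) - f (y / x₁)| := by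
            rw [hP1 x hx1, hP1 y hy1, ← mul_sub, abs_mul, abs_of_pos hy10]
        _ ≤ y₁ * (H * |x - y| ^ α / x₁ ^ α) := mul_le_mul_of_nonneg_left h hy10.le
        _ = y₁ / x₁ ^ α * H * |x - y| ^ α := by ring
        _ ≤ L * |x - y| ^ α := bump _ hlam1 _ _ (abs_nonneg _) le_rfl
    · rcases le_or_gt x x₁ with hx1 | hx1
      · rcases le_or_gt y x₂ with hy2 | hy2
        · -- x in piece 1, y in piece 2
          rw [habs]
          have r1 := hr1 x hx'.1 hx1
          have r2 := hr2 y hy1 hy2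
          have b1 := hb1 x hx'.1 hx1
          have b2 := hb2a y hy1 hy2
          have c1 := bump _ hlam1 (x₁ - x) (y - x) (by linarith) (by linarith)
          have c2 := bump _ hlam2 (y - x₁) (y - x) (by linarith) (by linarith)
          rw [abs_le]
          constructor
          · linarith [r2.2]
          · linarith [r1.2]
        · -- x in piece 1, y in piece 3 : far apart
          rw [habs]
          have r1 := hr1 x hx'.1 hx1
          have r3 := hr3 y hy2 hy'.2
          have hone : |Φ x - Φ y| ≤ 1 := by
            rw [abs_le]; constructor <;> [linarith [r1.1, r3.2]; linarith [r1.2, r3.1]]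
          have hratio : (1:ℝ) ≤ (y - x) / (x₂ - x₁) := (one_le_div hd).2 (by linarith)
          have h1 : (1:ℝ) ≤ ((y - x) / (x₂ - x₁)) ^ α := by
            calc (1:ℝ) = 1 ^ α := (Real.one_rpow α).symm
              _ ≤ _ := Real.rpow_le_rpow zero_le_one hratio hα0.le
          have h2 : ((y - x) / (x₂ - x₁)) ^ α = (x₂ - x₁) ^ (-α) * (y - x) ^ α := by
            rw [Real.div_rpow (by linarith : (0:ℝ) ≤ y - x) hd.le, Real.rpow_neg hd.le]
            ring
          calc |Φ x - Φ y| ≤ 1 := hone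
            _ ≤ (x₂ - x₁) ^ (-α) * (y - x) ^ α := by rw [← h2]; exact h1
            _ ≤ L * (y - x) ^ α :=
                mul_le_mul_of_nonneg_right (le_max_right _ _)
                  (Real.rpow_nonneg (by linarith) α)
      · rcases le_or_gt y x₂ with hy2 | hy2
        · -- both in piece 2
          have hx2 : x ≤ x₂ := hxy.trans hy2
          have h := holder_scaled f H α hH x₁ x₂ hx (x := x) (y := y) ⟨hx1.le, hx2⟩
            ⟨hy1.le, hy2⟩
          calc |Φ x - Φ y|
              = (y₁ - y₂) * |f ((x - x₁) / (x₂ - x₁)) - f ((y - x₁) / (x₂ - x₁))| := by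
                rw [hP2 x hx1 hx2, hP2 y hy1 hy2]
                rw [show y₁ - (y₁ - y₂) * f ((x - x₁) / (x₂ - x₁)) -
                    (y₁ - (y₁ - y₂) * f ((y - x₁) / (x₂ - x₁))) =
                    (y₁ - y₂) * (f ((y - x₁) / (x₂ - x₁)) - f ((x - x₁) / (x₂ - x₁))) by ring,
                  abs_mul, abs_of_pos (by linarith : (0:ℝ) < y₁ - y₂), abs_sub_comm]
            _ ≤ (y₁ - y₂) * (H * |x - y| ^ α / (x₂ - x₁) ^ α) :=
                mul_le_mul_of_nonneg_left h (by linarith)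
            _ = (y₁ - y₂) / (x₂ - x₁) ^ α * H * |x - y| ^ α := by ring
            _ ≤ L * |x - y| ^ α := bump _ hlam2 _ _ (abs_nonneg _) le_rfl
        · rcases le_or_gt x x₂ with hx2 | hx2
          · -- x in piece 2, y in piece 3
            rw [habs]
            have r2 := hr2 x hx1 hx2
            have r3 := hr3 y hy2 hy'.2
            have b1 := hb2b x hx1 hx2
            have b2 := hb3 y hy2 hy'.2
            have c1 := bump _ hlam2 (x₂ - x) (y - x) (by linarith) (by linarith)
            have c2 := bump _ hlam3 (y - x₂) (y - x) (by linarith) (by linarith)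
            rw [abs_le]
            constructor
            · linarith [r2.1]
            · linarith [r3.1]
          · -- both in piece 3
            have h := holder_scaled f H α hH x₂ 1 hx21 (x := x) (y := y) ⟨hx2.le, hx'.2⟩
              ⟨(hx2.trans_le hxy).le, hy'.2⟩
            calc |Φ x - Φ y|
                = (1 - y₂) * |f ((x - x₂) / (1 - x₂)) - f ((y - x₂) / (1 - x₂))| := by
                  rw [hP3 x hx2, hP3 y (hx2.trans_le hxy)]
                  rw [show y₂ + (1 - y₂) * f ((x - x₂) / (1 - x₂)) -
                      (y₂ + (1 - y₂) * f ((y - x₂) / (1 - x₂))) =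
                      (1 - y₂) * (f ((x - x₂) / (1 - x₂)) - f ((y - x₂) / (1 - x₂))) by ring,
                    abs_mul, abs_of_pos (by linarith : (0:ℝ) < 1 - y₂)]
              _ ≤ (1 - y₂) * (H * |x - y| ^ α / (1 - x₂) ^ α) :=
                  mul_le_mul_of_nonneg_left h (by linarith)
              _ = (1 - y₂) / (1 - x₂) ^ α * H * |x - y| ^ α := by ring
              _ ≤ L * |x - y| ^ α := bump _ hlam3 _ _ (abs_nonneg _) le_rfl
  intro x hx' y hy'
  rcases le_total x y with hxy | hxy
  · exact key x hx' y hy' hxy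
  · rw [abs_sub_comm (Φ x), abs_sub_comm x y]
    exact key y hy' x hx' hxy
end

section
/- The zipper map Z_p is α_min-Hölder continuous with Hölder constant at most (x₂-x₁)^{-α_min}, where α_min = min( log y₁ / log x₁, log(y₁-y₂)/log(x₂-x₁), log(1-y₂)/log(1-x₂) ) > 0. -/
set_option maxHeartbeats 800000


open Set

/-- The zipper map Z_p (the fixed point of Φ_p in C⁰₀) is α_min-Hölder with
constant at most (x₂-x₁)^{-α_min}, where α_min > 0. -/
theorem zipper_isHolder (x₁ y₁ x₂ y₂ : ℝ)
    (hx₁ : x₁ ∈ Ioo (0:ℝ) 1) (hy₁ : y₁ ∈ Ioo (0:ℝ) 1)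
    (hx₂ : x₂ ∈ Ioo (0:ℝ) 1) (hy₂ : y₂ ∈ Ioo (0:ℝ) 1)
    (hx : x₁ < x₂) (hy : y₂ < y₁)
    (Z : ℝ → ℝ) (hZ : IsC00 Z) (hfix : EqOn (zipperPhi x₁ y₁ x₂ y₂ Z) Z (Icc 0 1)) :
    0 < min (Real.log y₁ / Real.log x₁)
        (min (Real.log (y₁ - y₂) / Real.log (x₂ - x₁)) (Real.log (1 - y₂) / Real.log (1 - x₂))) ∧
    ∀ x ∈ Icc (0:ℝ) 1, ∀ y ∈ Icc (0:ℝ) 1,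
      |Z x - Z y| ≤ (x₂ - x₁) ^
          (-(min (Real.log y₁ / Real.log x₁)
            (min (Real.log (y₁ - y₂) / Real.log (x₂ - x₁))
              (Real.log (1 - y₂) / Real.log (1 - x₂))))) *
        |x - y| ^ (min (Real.log y₁ / Real.log x₁)
            (min (Real.log (y₁ - y₂) / Real.log (x₂ - x₁))
              (Real.log (1 - y₂) / Real.log (1 - x₂)))) := by
  obtain ⟨hx₁0, hx₁1⟩ := hx₁
  obtain ⟨hy₁0, hy₁1⟩ := hy₁
  obtain ⟨hx₂0, hx₂1⟩ := hx₂
  obtain ⟨hy₂0, hy₂1⟩ := hy₂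
  obtain ⟨hZc, hZmap, hZ0, hZ1⟩ := hZ
  set α := min (Real.log y₁ / Real.log x₁)
      (min (Real.log (y₁ - y₂) / Real.log (x₂ - x₁)) (Real.log (1 - y₂) / Real.log (1 - x₂)))
    with hαdef
  -- positivity of α
  have logdiv_pos : ∀ a b : ℝ, 0 < a → a < 1 → 0 < b → b < 1 →
      0 < Real.log b / Real.log a := by
    intro a b ha0 ha1 hb0 hb1
    exact div_pos_of_neg_of_neg (Real.log_neg hb0 hb1) (Real.log_neg ha0 ha1)
  have hd21 : (0:ℝ) < x₂ - x₁ := by linarith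
  have hd21' : x₂ - x₁ < 1 := by linarith
  have he21 : (0:ℝ) < y₁ - y₂ := by linarith
  have he21' : y₁ - y₂ < 1 := by linarith
  have hα : 0 < α :=
    lt_min (logdiv_pos _ _ hx₁0 hx₁1 hy₁0 hy₁1)
      (lt_min (logdiv_pos _ _ hd21 hd21' he21 he21')
        (logdiv_pos _ _ (by linarith) (by linarith) (by linarith) (by linarith)))
  refine ⟨hα, ?_⟩
  set C := (x₂ - x₁) ^ (-α) with hCdef
  have hC0 : 0 < C := Real.rpow_pos_of_pos hd21 _
  -- the three scaling inequalities
  have scale : ∀ a b : ℝ, 0 < a → a < 1 → 0 < b → α ≤ Real.log b / Real.log a →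
      b ≤ a ^ α := by
    intro a b ha0 ha1 hb0 h
    have hla : Real.log a < 0 := Real.log_neg ha0 ha1
    have h2 : Real.log b ≤ α * Real.log a := (le_div_iff_of_neg hla).mp h
    calc b = Real.exp (Real.log b) := (Real.exp_log hb0).symm
      _ ≤ Real.exp (Real.log a * α) := Real.exp_le_exp.mpr (by linarith)
      _ = a ^ α := (Real.rpow_def_of_pos ha0 α).symm
  have s1 : y₁ ≤ x₁ ^ α := scale _ _ hx₁0 hx₁1 hy₁0 (min_le_left _ _)
  have s2 : y₁ - y₂ ≤ (x₂ - x₁) ^ α :=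
    scale _ _ hd21 hd21' he21 ((min_le_right _ _).trans (min_le_left _ _))
  have s3 : 1 - y₂ ≤ (1 - x₂) ^ α :=
    scale _ _ (by linarith) (by linarith) (by linarith)
      ((min_le_right _ _).trans (min_le_right _ _))
  set H := max y₁ (max (y₁ - y₂) (1 - y₂)) with hHdef
  have hH1 : H < 1 := max_lt hy₁1 (max_lt (by linarith) (by linarith))
  have hH0 : 0 < H := hy₁0.trans_le (le_max_left _ _)
  have hHy₁ : y₁ ≤ H := le_max_left _ _
  have hHm : y₁ - y₂ ≤ H := (le_max_left _ _).trans (le_max_right _ _)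
  have hHr : 1 - y₂ ≤ H := (le_max_right _ _).trans (le_max_right _ _)
  -- membership helpers
  have memL : ∀ u : ℝ, u ∈ Icc 0 x₁ → u / x₁ ∈ Icc (0:ℝ) 1 := fun u hu =>
    ⟨div_nonneg hu.1 hx₁0.le, (div_le_one hx₁0).mpr hu.2⟩
  have memM : ∀ u : ℝ, u ∈ Icc x₁ x₂ → (u - x₁) / (x₂ - x₁) ∈ Icc (0:ℝ) 1 := fun u hu =>
    ⟨div_nonneg (by linarith [hu.1]) hd21.le, (div_le_one hd21).mpr (by linarith [hu.2])⟩
  have memR : ∀ u : ℝ, u ∈ Icc x₂ 1 → (u - x₂) / (1 - x₂) ∈ Icc (0:ℝ) 1 := fun u hu =>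
    ⟨div_nonneg (by linarith [hu.1]) (by linarith), (div_le_one (by linarith)).mpr
      (by linarith [hu.2])⟩
  have subI : Icc (0:ℝ) x₁ ⊆ Icc (0:ℝ) 1 := Icc_subset_Icc le_rfl hx₁1.le
  have subM : Icc x₁ x₂ ⊆ Icc (0:ℝ) 1 := Icc_subset_Icc hx₁0.le hx₂1.le
  have subR : Icc x₂ 1 ⊆ Icc (0:ℝ) 1 := Icc_subset_Icc hx₂0.le le_rfl
  -- representation lemmas
  have reprL : ∀ u ∈ Icc (0:ℝ) x₁, Z u = y₁ * Z (u / x₁) := by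
    intro u hu
    rw [← hfix (subI hu)]
    simp [zipperPhi, hu.2]
  have reprM : ∀ u ∈ Icc x₁ x₂, Z u = y₁ - (y₁ - y₂) * Z ((u - x₁) / (x₂ - x₁)) := by
    intro u hu
    rcases eq_or_lt_of_le hu.1 with h | h
    · rw [← h]
      have : Z x₁ = y₁ := by
        rw [← hfix (subI ⟨hx₁0.le, le_rfl⟩)]
        simp [zipperPhi, div_self hx₁0.ne', hZ1]
      rw [this]
      simp [hZ0]
    · rw [← hfix (subM hu)]
      simp [zipperPhi, not_le.mpr h, hu.2]
  have reprR : ∀ u ∈ Icc x₂ (1:ℝ), Z u = y₂ + (1 - y₂) * Z ((u - x₂) / (1 - x₂)) := by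
    intro u hu
    rcases eq_or_lt_of_le hu.1 with h | h
    · rw [← h]
      have : Z x₂ = y₂ := by
        rw [← hfix (subM ⟨hx.le, le_rfl⟩)]
        simp [zipperPhi, not_le.mpr hx, div_self hd21.ne', hZ1]
      rw [this]
      simp [hZ0]
    · rw [← hfix (subR hu)]
      simp [zipperPhi, not_le.mpr (hx.trans h), not_le.mpr h]
  -- value bounds
  have Zmem : ∀ u ∈ Icc (0:ℝ) 1, Z u ∈ Icc (0:ℝ) 1 := fun u hu => hZmap hu
  have Zx₁ : Z x₁ = y₁ := by
    rw [reprL x₁ ⟨hx₁0.le, le_rfl⟩, div_self hx₁0.ne', hZ1, mul_one]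
  have Zx₂ : Z x₂ = y₂ := by
    rw [reprM x₂ ⟨hx.le, le_rfl⟩, div_self hd21.ne', hZ1, mul_one]
    ring
  have boundL : ∀ u ∈ Icc (0:ℝ) x₁, Z u ≤ y₁ := by
    intro u hu
    rw [reprL u hu]
    calc y₁ * Z (u / x₁) ≤ y₁ * 1 :=
          mul_le_mul_of_nonneg_left (Zmem _ (memL u hu)).2 hy₁0.le
      _ = y₁ := mul_one y₁
  have boundM : ∀ u ∈ Icc x₁ x₂, y₂ ≤ Z u ∧ Z u ≤ y₁ := by
    intro u hu
    rw [reprM u hu]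
    have h1 := (Zmem _ (memM u hu)).1
    have h2 := (Zmem _ (memM u hu)).2
    have k1 : (y₁ - y₂) * Z ((u - x₁) / (x₂ - x₁)) ≤ (y₁ - y₂) * 1 :=
      mul_le_mul_of_nonneg_left h2 he21.le
    have k2 : 0 ≤ (y₁ - y₂) * Z ((u - x₁) / (x₂ - x₁)) := mul_nonneg he21.le h1
    constructor <;> linarith
  have boundR : ∀ u ∈ Icc x₂ (1:ℝ), y₂ ≤ Z u := by
    intro u hu
    rw [reprR u hu]
    have h1 := (Zmem _ (memR u hu)).1
    have k2 : 0 ≤ (1 - y₂) * Z ((u - x₂) / (1 - x₂)) :=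
      mul_nonneg (by linarith) h1
    linarith
  -- triangle-type helpers
  have triU : ∀ a b c : ℝ, a ≤ c → b ≤ c → |a - b| ≤ max (c - a) (c - b) := by
    intro a b c h1 h2
    rcases le_total a b with h | h
    · rw [abs_sub_comm, abs_of_nonneg (by linarith)]
      exact le_max_of_le_left (by linarith)
    · rw [abs_of_nonneg (by linarith)]
      exact le_max_of_le_right (by linarith)
  have triD : ∀ a b c : ℝ, c ≤ a → c ≤ b → |a - b| ≤ max (a - c) (b - c) := by
    intro a b c h1 h2
    rcases le_total a b with h | h
    · rw [abs_sub_comm, abs_of_nonneg (by linarith)]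
      exact le_max_of_le_right (by linarith)
    · rw [abs_of_nonneg (by linarith)]
      exact le_max_of_le_left (by linarith)
  -- main induction
  have main : ∀ n : ℕ, ∀ x ∈ Icc (0:ℝ) 1, ∀ y ∈ Icc (0:ℝ) 1,
      |Z x - Z y| ≤ C * |x - y| ^ α + H ^ n := by
    intro n
    induction n with
    | zero =>
      intro x hxm y hym
      have h1 := Zmem x hxm
      have h2 := Zmem y hym
      have : |Z x - Z y| ≤ 1 :=
        abs_sub_le_iff.mpr ⟨by linarith [h1.1, h1.2, h2.1, h2.2],
          by linarith [h1.1, h1.2, h2.1, h2.2]⟩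
      have hpos : 0 ≤ C * |x - y| ^ α :=
        mul_nonneg hC0.le (Real.rpow_nonneg (abs_nonneg _) _)
      simpa using this.trans (by linarith)
    | succ n IH =>
      -- scaled estimates on each of the three pieces
      have LA : ∀ u ∈ Icc (0:ℝ) x₁, ∀ v ∈ Icc (0:ℝ) x₁,
          |Z u - Z v| ≤ C * |u - v| ^ α + H ^ (n+1) := by
        intro u hu v hv
        have harg : |u / x₁ - v / x₁| = |u - v| / x₁ := by
          rw [div_sub_div_same, abs_div, abs_of_pos hx₁0]
        calc |Z u - Z v| = y₁ * |Z (u / x₁) - Z (v / x₁)| := by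
              rw [reprL u hu, reprL v hv, ← mul_sub, abs_mul, abs_of_pos hy₁0]
          _ ≤ y₁ * (C * |u / x₁ - v / x₁| ^ α + H ^ n) :=
              mul_le_mul_of_nonneg_left (IH _ (memL u hu) _ (memL v hv)) hy₁0.le
          _ = C * |u - v| ^ α * (y₁ / x₁ ^ α) + y₁ * H ^ n := by
              rw [harg, Real.div_rpow (abs_nonneg _) hx₁0.le]; ring
          _ ≤ C * |u - v| ^ α * 1 + H * H ^ n := by
              have h1 : y₁ / x₁ ^ α ≤ 1 :=
                (div_le_one (Real.rpow_pos_of_pos hx₁0 _)).mpr s1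
              have h2 : (0:ℝ) ≤ C * |u - v| ^ α :=
                mul_nonneg hC0.le (Real.rpow_nonneg (abs_nonneg _) _)
              have h3 : (0:ℝ) ≤ H ^ n := pow_nonneg hH0.le n
              exact add_le_add (mul_le_mul_of_nonneg_left h1 h2)
                (mul_le_mul_of_nonneg_right hHy₁ h3)
          _ = C * |u - v| ^ α + H ^ (n+1) := by ring
      have LB : ∀ u ∈ Icc x₁ x₂, ∀ v ∈ Icc x₁ x₂,
          |Z u - Z v| ≤ C * |u - v| ^ α + H ^ (n+1) := by
        intro u hu v hv
        have harg : |(u - x₁) / (x₂ - x₁) - (v - x₁) / (x₂ - x₁)| = |u - v| / (x₂ - x₁) := by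
          rw [div_sub_div_same, sub_sub_sub_cancel_right, abs_div, abs_of_pos hd21]
        calc |Z u - Z v|
            = (y₁ - y₂) * |Z ((v - x₁) / (x₂ - x₁)) - Z ((u - x₁) / (x₂ - x₁))| := by
              rw [reprM u hu, reprM v hv,
                show y₁ - (y₁ - y₂) * Z ((u - x₁) / (x₂ - x₁)) -
                    (y₁ - (y₁ - y₂) * Z ((v - x₁) / (x₂ - x₁))) =
                  (y₁ - y₂) * (Z ((v - x₁) / (x₂ - x₁)) - Z ((u - x₁) / (x₂ - x₁))) from by
                    ring,
                abs_mul, abs_of_pos he21]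
          _ ≤ (y₁ - y₂) * (C * |(v - x₁) / (x₂ - x₁) - (u - x₁) / (x₂ - x₁)| ^ α + H ^ n) :=
              mul_le_mul_of_nonneg_left (IH _ (memM v hv) _ (memM u hu)) he21.le
          _ = C * |u - v| ^ α * ((y₁ - y₂) / (x₂ - x₁) ^ α) + (y₁ - y₂) * H ^ n := by
              rw [div_sub_div_same, sub_sub_sub_cancel_right, abs_div, abs_of_pos hd21,
                abs_sub_comm v u, Real.div_rpow (abs_nonneg _) hd21.le]
              ring
          _ ≤ C * |u - v| ^ α * 1 + H * H ^ n := by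
              have h1 : (y₁ - y₂) / (x₂ - x₁) ^ α ≤ 1 :=
                (div_le_one (Real.rpow_pos_of_pos hd21 _)).mpr s2
              have h2 : (0:ℝ) ≤ C * |u - v| ^ α :=
                mul_nonneg hC0.le (Real.rpow_nonneg (abs_nonneg _) _)
              have h3 : (0:ℝ) ≤ H ^ n := pow_nonneg hH0.le n
              exact add_le_add (mul_le_mul_of_nonneg_left h1 h2)
                (mul_le_mul_of_nonneg_right hHm h3)
          _ = C * |u - v| ^ α + H ^ (n+1) := by ring
      have LC : ∀ u ∈ Icc x₂ (1:ℝ), ∀ v ∈ Icc x₂ (1:ℝ),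
          |Z u - Z v| ≤ C * |u - v| ^ α + H ^ (n+1) := by
        intro u hu v hv
        have hd : (0:ℝ) < 1 - x₂ := by linarith
        have he : (0:ℝ) < 1 - y₂ := by linarith
        have harg : |(u - x₂) / (1 - x₂) - (v - x₂) / (1 - x₂)| = |u - v| / (1 - x₂) := by
          rw [div_sub_div_same, sub_sub_sub_cancel_right, abs_div, abs_of_pos hd]
        calc |Z u - Z v|
            = (1 - y₂) * |Z ((u - x₂) / (1 - x₂)) - Z ((v - x₂) / (1 - x₂))| := by
              rw [reprR u hu, reprR v hv,
                show y₂ + (1 - y₂) * Z ((u - x₂) / (1 - x₂)) -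
                    (y₂ + (1 - y₂) * Z ((v - x₂) / (1 - x₂))) =
                  (1 - y₂) * (Z ((u - x₂) / (1 - x₂)) - Z ((v - x₂) / (1 - x₂))) from by ring,
                abs_mul, abs_of_pos he]
          _ ≤ (1 - y₂) * (C * |(u - x₂) / (1 - x₂) - (v - x₂) / (1 - x₂)| ^ α + H ^ n) :=
              mul_le_mul_of_nonneg_left (IH _ (memR u hu) _ (memR v hv)) he.le
          _ = C * |u - v| ^ α * ((1 - y₂) / (1 - x₂) ^ α) + (1 - y₂) * H ^ n := by
              rw [harg, Real.div_rpow (abs_nonneg _) hd.le]; ring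
          _ ≤ C * |u - v| ^ α * 1 + H * H ^ n := by
              have h1 : (1 - y₂) / (1 - x₂) ^ α ≤ 1 :=
                (div_le_one (Real.rpow_pos_of_pos hd _)).mpr s3
              have h2 : (0:ℝ) ≤ C * |u - v| ^ α :=
                mul_nonneg hC0.le (Real.rpow_nonneg (abs_nonneg _) _)
              have h3 : (0:ℝ) ≤ H ^ n := pow_nonneg hH0.le n
              exact add_le_add (mul_le_mul_of_nonneg_left h1 h2)
                (mul_le_mul_of_nonneg_right hHr h3)
          _ = C * |u - v| ^ α + H ^ (n+1) := by ring
      -- monotonicity of the bound in the distance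
      have mono : ∀ d d' : ℝ, 0 ≤ d → d ≤ d' →
          C * d ^ α + H ^ (n+1) ≤ C * d' ^ α + H ^ (n+1) := by
        intro d d' h0 h1
        have h2 := Real.rpow_le_rpow h0 h1 hα.le
        have := mul_le_mul_of_nonneg_left h2 hC0.le
        linarith
      have key : ∀ x ∈ Icc (0:ℝ) 1, ∀ y ∈ Icc (0:ℝ) 1, x ≤ y →
          |Z x - Z y| ≤ C * |x - y| ^ α + H ^ (n+1) := by
        intro x hxm y hym hxy
        have habs : |x - y| = y - x := by rw [abs_sub_comm, abs_of_nonneg (by linarith)]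
        rcases le_or_gt y x₁ with h | h
        · exact LA x ⟨hxm.1, hxy.trans h⟩ y ⟨(hxm.1).trans hxy, h⟩
        rcases le_or_gt x₂ x with h2 | h2
        · exact LC x ⟨h2, hxy.trans hym.2⟩ y ⟨h2.trans hxy, hym.2⟩
        rcases le_or_gt x₁ x with h3 | h3
        · rcases le_or_gt y x₂ with h4 | h4
          · exact LB x ⟨h3, h2.le⟩ y ⟨h.le, h4⟩
          · -- x ∈ [x₁,x₂], y ∈ [x₂,1]
            have hxM : x ∈ Icc x₁ x₂ := ⟨h3, h2.le⟩
            have hyR : y ∈ Icc x₂ (1:ℝ) := ⟨h4.le, hym.2⟩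
            have b1 : y₂ ≤ Z x := (boundM x hxM).1
            have b2 : y₂ ≤ Z y := boundR y hyR
            have t := triD (Z x) (Z y) y₂ b1 b2
            have e1 : Z x - y₂ = |Z x - Z x₂| := by
              rw [Zx₂, abs_of_nonneg (by linarith)]
            have e2 : Z y - y₂ = |Z y - Z x₂| := by
              rw [Zx₂, abs_of_nonneg (by linarith)]
            have c1 : |Z x - Z x₂| ≤ C * |x - y| ^ α + H ^ (n+1) := by
              refine (LB x hxM x₂ ⟨hx.le, le_rfl⟩).trans ?_
              apply mono _ _ (abs_nonneg _)
              rw [habs, abs_of_nonpos (by linarith)]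
              linarith
            have c2 : |Z y - Z x₂| ≤ C * |x - y| ^ α + H ^ (n+1) := by
              refine (LC y hyR x₂ ⟨le_rfl, hx₂1.le⟩).trans ?_
              apply mono _ _ (abs_nonneg _)
              rw [habs, abs_of_nonneg (by linarith)]
              linarith
            calc |Z x - Z y| ≤ max (Z x - y₂) (Z y - y₂) := t
              _ ≤ C * |x - y| ^ α + H ^ (n+1) := by
                  rw [e1, e2]; exact max_le c1 c2
        · rcases le_or_gt y x₂ with h4 | h4
          · -- x ∈ [0,x₁], y ∈ [x₁,x₂]
            have hxL : x ∈ Icc (0:ℝ) x₁ := ⟨hxm.1, h3.le⟩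
            have hyM : y ∈ Icc x₁ x₂ := ⟨h.le, h4⟩
            have b1 : Z x ≤ y₁ := boundL x hxL
            have b2 : Z y ≤ y₁ := (boundM y hyM).2
            have t := triU (Z x) (Z y) y₁ b1 b2
            have e1 : y₁ - Z x = |Z x - Z x₁| := by
              rw [Zx₁, abs_of_nonpos (by linarith), neg_sub]
            have e2 : y₁ - Z y = |Z y - Z x₁| := by
              rw [Zx₁, abs_of_nonpos (by linarith), neg_sub]
            have c1 : |Z x - Z x₁| ≤ C * |x - y| ^ α + H ^ (n+1) := by
              refine (LA x hxL x₁ ⟨hx₁0.le, le_rfl⟩).trans ?_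
              apply mono _ _ (abs_nonneg _)
              rw [habs, abs_of_nonpos (by linarith)]
              linarith
            have c2 : |Z y - Z x₁| ≤ C * |x - y| ^ α + H ^ (n+1) := by
              refine (LB y hyM x₁ ⟨le_rfl, hx.le⟩).trans ?_
              apply mono _ _ (abs_nonneg _)
              rw [habs, abs_of_nonneg (by linarith)]
              linarith
            calc |Z x - Z y| ≤ max (y₁ - Z x) (y₁ - Z y) := t
              _ ≤ C * |x - y| ^ α + H ^ (n+1) := by
                  rw [e1, e2]; exact max_le c1 c2
          · -- x ∈ [0,x₁], y ∈ [x₂,1] : far apart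
            have h1 := Zmem x hxm
            have h2 := Zmem y hym
            have hZb : |Z x - Z y| ≤ 1 :=
              abs_sub_le_iff.mpr ⟨by linarith [h1.1, h1.2, h2.1, h2.2],
                by linarith [h1.1, h1.2, h2.1, h2.2]⟩
            have hone : C * (x₂ - x₁) ^ α = 1 := by
              rw [hCdef, Real.rpow_neg hd21.le]
              exact inv_mul_cancel₀ (ne_of_gt (Real.rpow_pos_of_pos hd21 _))
            have hdist : x₂ - x₁ ≤ |x - y| := by
              rw [habs]; linarith
            have : (1:ℝ) ≤ C * |x - y| ^ α := by
              rw [← hone]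
              exact mul_le_mul_of_nonneg_left
                (Real.rpow_le_rpow hd21.le hdist hα.le) hC0.le
            have h3 : (0:ℝ) ≤ H ^ (n+1) := pow_nonneg hH0.le _
            linarith
      intro x hxm y hym
      rcases le_total x y with h | h
      · exact key x hxm y hym h
      · rw [abs_sub_comm (Z x), abs_sub_comm x y]
        exact key y hym x hxm h
  -- pass to the limit
  intro x hxm y hym
  refine le_of_forall_pos_le_add ?_
  intro ε hε
  obtain ⟨n, hn⟩ := exists_pow_lt_of_lt_one hε hH1
  have := main n x hxm y hym
  linarith
end

section
/- If λ_min := min(y₁/x₁, (y₁-y₂)/(x₂-x₁), (1-y₂)/(1-x₂)) ≤ 1, then the zipper map Z_p is not hypersensitive: for every C > 0 and β ∈ (0,1) there exists an interval A ⊂ [0,1] with |Z_p(A)| < C|A|^β. -/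
open Set MeasureTheory

/-!
Some branch of the zipper, say `x ↦ t + h x`, is rescaled by `Z` by a factor `|σ| ≤ h`
(this is `λ_min ≤ 1`). Iterating the self-similarity `Z (t + h x) = s + σ Z x` gives intervals of
length `h ^ ℓ` on which `Z` oscillates by at most `|σ| ^ ℓ ≤ h ^ ℓ`, and `h ^ ℓ = o((h ^ ℓ) ^ β)`
as `ℓ → ∞` because `β < 1`.
-/

theorem exists_pow_lt_mul_rpow_pow {h C β : ℝ} (hh₀ : 0 < h) (hh₁ : h < 1) (hC : 0 < C)
    (hβ : β < 1) : ∃ ℓ : ℕ, h ^ ℓ < C * (h ^ ℓ) ^ β := by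
  obtain ⟨ℓ, hℓ⟩ := exists_pow_lt_of_lt_one hC (Real.rpow_lt_one hh₀.le hh₁ (sub_pos.2 hβ))
  refine ⟨ℓ, ?_⟩
  have hpow : 0 < h ^ ℓ := pow_pos hh₀ ℓ
  calc h ^ ℓ = (h ^ ℓ) ^ β * (h ^ (1 - β)) ^ ℓ := by
        rw [Real.rpow_pow_comm hh₀.le, ← Real.rpow_add hpow, add_sub_cancel, Real.rpow_one]
    _ < (h ^ ℓ) ^ β * C := by gcongr
    _ = C * (h ^ ℓ) ^ β := mul_comm _ _

theorem volume_toReal_le_of_forall_abs_sub_le {S : Set ℝ} {w : ℝ} (hw : 0 ≤ w)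
    (hS : ∀ x ∈ S, ∀ y ∈ S, |x - y| ≤ w) : (volume S).toReal ≤ w :=
  ENNReal.toReal_le_of_le_ofReal hw <| (Real.volume_le_diam S).trans <|
    Metric.ediam_le_of_forall_dist_le fun x hx y hy => by rw [Real.dist_eq]; exact hS x hx y hy

theorem exists_Icc_abs_sub_le_pow_of_affine_comp {Z : ℝ → ℝ} {t h s σ : ℝ}
    (hZ : MapsTo Z (Icc 0 1) (Icc 0 1)) (hh : 0 < h) (ht : 0 ≤ t) (hth : t + h ≤ 1)
    (hrec : ∀ x ∈ Icc (0 : ℝ) 1, Z (t + h * x) = s + σ * Z x) (ℓ : ℕ) :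
    ∃ a, 0 ≤ a ∧ a + h ^ ℓ ≤ 1 ∧
      ∀ x ∈ Icc a (a + h ^ ℓ), ∀ y ∈ Icc a (a + h ^ ℓ), |Z x - Z y| ≤ |σ| ^ ℓ := by
  induction ℓ with
  | zero =>
    refine ⟨0, le_rfl, by simp, fun x hx y hy => ?_⟩
    obtain ⟨hZx₀, hZx₁⟩ := hZ (by simpa using hx)
    obtain ⟨hZy₀, hZy₁⟩ := hZ (by simpa using hy)
    rw [pow_zero, abs_sub_le_iff]
    constructor <;> linarith
  | succ n ih =>
    obtain ⟨a, ha, hah, hosc⟩ := ih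
    have hIcc : Icc (t + h * a) (t + h * a + h ^ (n + 1)) =
        (fun x => h * x + t) '' Icc a (a + h ^ n) := by
      rw [image_affine_Icc' hh]; congr 1 <;> ring
    refine ⟨t + h * a, by positivity, ?_, ?_⟩
    · have := mul_le_mul_of_nonneg_left hah hh.le
      rw [pow_succ']
      linarith
    · rw [hIcc]
      rintro _ ⟨x, hx, rfl⟩ _ ⟨y, hy, rfl⟩
      have hx01 : x ∈ Icc (0 : ℝ) 1 := ⟨ha.trans hx.1, hx.2.trans hah⟩
      have hy01 : y ∈ Icc (0 : ℝ) 1 := ⟨ha.trans hy.1, hy.2.trans hah⟩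
      dsimp only
      rw [add_comm _ t, add_comm _ t, hrec x hx01, hrec y hy01, add_sub_add_left_eq_sub,
        ← mul_sub, abs_mul, pow_succ']
      exact mul_le_mul_of_nonneg_left (hosc x hx y hy) (abs_nonneg σ)

section ZipperBranches

variable {x₁ y₁ x₂ y₂ : ℝ} {Z : ℝ → ℝ}

theorem zipperPhi_fixed_apply_left (hx₁ : 0 < x₁) (hx₁' : x₁ ≤ 1)
    (hfix : EqOn (zipperPhi x₁ y₁ x₂ y₂ Z) Z (Icc 0 1)) :
    ∀ x ∈ Icc (0 : ℝ) 1, Z (x₁ * x) = y₁ * Z x := by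
  rintro x ⟨hx0, hx1⟩
  have hu : x₁ * x ∈ Icc (0 : ℝ) 1 := ⟨by positivity, by nlinarith⟩
  rw [← hfix hu, zipperPhi, if_pos (by nlinarith), mul_div_cancel_left₀ _ hx₁.ne']

/-- At `x = 0` the point `x₁` lies in the left piece of `zipperPhi`; the pieces agree there
because `Z 0 = 0` and `Z 1 = 1`. -/
theorem zipperPhi_fixed_apply_middle (hx₁ : 0 < x₁) (hx : x₁ < x₂) (hx₂ : x₂ ≤ 1)
    (hZ₀ : Z 0 = 0) (hZ₁ : Z 1 = 1) (hfix : EqOn (zipperPhi x₁ y₁ x₂ y₂ Z) Z (Icc 0 1)) :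
    ∀ x ∈ Icc (0 : ℝ) 1, Z (x₁ + (x₂ - x₁) * x) = y₁ - (y₁ - y₂) * Z x := by
  rintro x ⟨hx0, hx1⟩
  have hd : 0 < x₂ - x₁ := sub_pos.2 hx
  have hu : x₁ + (x₂ - x₁) * x ∈ Icc (0 : ℝ) 1 := ⟨by positivity, by nlinarith⟩
  rw [← hfix hu, zipperPhi]
  rcases hx0.eq_or_lt with rfl | hx0
  · simp [hx₁.ne', hZ₀, hZ₁]
  · rw [if_neg (by nlinarith), if_pos (by nlinarith), add_sub_cancel_left,
      mul_div_cancel_left₀ _ hd.ne']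

/-- At `x = 0` the point `x₂` lies in the middle piece of `zipperPhi`; the pieces agree there
because `Z 0 = 0` and `Z 1 = 1`. -/
theorem zipperPhi_fixed_apply_right (hx : x₁ < x₂) (hx₂ : 0 ≤ x₂) (hx₂' : x₂ < 1)
    (hZ₀ : Z 0 = 0) (hZ₁ : Z 1 = 1) (hfix : EqOn (zipperPhi x₁ y₁ x₂ y₂ Z) Z (Icc 0 1)) :
    ∀ x ∈ Icc (0 : ℝ) 1, Z (x₂ + (1 - x₂) * x) = y₂ + (1 - y₂) * Z x := by
  rintro x ⟨hx0, hx1⟩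
  have hd : 0 < 1 - x₂ := sub_pos.2 hx₂'
  have hu : x₂ + (1 - x₂) * x ∈ Icc (0 : ℝ) 1 := ⟨by positivity, by nlinarith⟩
  rw [← hfix hu, zipperPhi]
  rcases hx0.eq_or_lt with rfl | hx0
  · simp [hx.not_ge, div_self (sub_pos.2 hx).ne', hZ₀, hZ₁]
  · rw [if_neg (by nlinarith), if_neg (by nlinarith), add_sub_cancel_left,
      mul_div_cancel_left₀ _ hd.ne']

theorem exists_zipperPhi_fixed_affine_branch (hx₁ : 0 < x₁) (hx : x₁ < x₂) (hx₂ : x₂ < 1)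
    (hy₁ : 0 ≤ y₁) (hy : y₂ < y₁) (hy₂ : y₂ ≤ 1)
    (hlam : min (y₁ / x₁) (min ((y₁ - y₂) / (x₂ - x₁)) ((1 - y₂) / (1 - x₂))) ≤ 1)
    (hZ₀ : Z 0 = 0) (hZ₁ : Z 1 = 1) (hfix : EqOn (zipperPhi x₁ y₁ x₂ y₂ Z) Z (Icc 0 1)) :
    ∃ t h s σ : ℝ, 0 ≤ t ∧ 0 < h ∧ h < 1 ∧ t + h ≤ 1 ∧ |σ| ≤ h ∧
      ∀ x ∈ Icc (0 : ℝ) 1, Z (t + h * x) = s + σ * Z x := by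
  rcases min_le_iff.1 hlam with hleft | hlam'
  · refine ⟨0, x₁, 0, y₁, le_rfl, hx₁, by linarith, by linarith, ?_, ?_⟩
    · rwa [abs_of_nonneg hy₁, ← div_le_one hx₁]
    · simpa using zipperPhi_fixed_apply_left hx₁ (by linarith) hfix
  rcases min_le_iff.1 hlam' with hmiddle | hright
  · refine ⟨x₁, x₂ - x₁, y₁, -(y₁ - y₂), hx₁.le, sub_pos.2 hx, by linarith, by linarith, ?_,
      fun x hx' => ?_⟩
    · rwa [abs_neg, abs_of_pos (sub_pos.2 hy), ← div_le_one (sub_pos.2 hx)]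
    · rw [zipperPhi_fixed_apply_middle hx₁ hx hx₂.le hZ₀ hZ₁ hfix x hx']
      ring
  · refine ⟨x₂, 1 - x₂, y₂, 1 - y₂, by linarith, sub_pos.2 hx₂, by linarith, by linarith, ?_,
      zipperPhi_fixed_apply_right hx (by linarith) hx₂ hZ₀ hZ₁ hfix⟩
    rwa [abs_of_nonneg (sub_nonneg.2 hy₂), ← div_le_one (sub_pos.2 hx₂)]

end ZipperBranches

/-- If λ_min ≤ 1 then the zipper map is not hypersensitive: for every C > 0 and
β ∈ (0,1) there is an interval A ⊆ [0,1] with |Z_p(A)| < C |A|^β. -/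
theorem zipper_not_hypersensitive (x₁ y₁ x₂ y₂ : ℝ)
    (hx₁ : x₁ ∈ Ioo (0:ℝ) 1) (hy₁ : y₁ ∈ Ioo (0:ℝ) 1)
    (hx₂ : x₂ ∈ Ioo (0:ℝ) 1) (hy₂ : y₂ ∈ Ioo (0:ℝ) 1)
    (hx : x₁ < x₂) (hy : y₂ < y₁)
    (hlam : min (y₁ / x₁) (min ((y₁ - y₂) / (x₂ - x₁)) ((1 - y₂) / (1 - x₂))) ≤ 1)
    (Z : ℝ → ℝ) (hZ : IsC00 Z) (hfix : EqOn (zipperPhi x₁ y₁ x₂ y₂ Z) Z (Icc 0 1)) :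
    ∀ C : ℝ, 0 < C → ∀ β ∈ Ioo (0:ℝ) 1,
      ∃ a b : ℝ, 0 ≤ a ∧ a ≤ b ∧ b ≤ 1 ∧
        (volume (Z '' Icc a b)).toReal < C * (b - a) ^ β := by
  intro C hC β hβ
  obtain ⟨-, hZ, hZ₀, hZ₁⟩ := hZ
  obtain ⟨t, h, s, σ, ht, hh₀, hh₁, hth, hσ, hrec⟩ := exists_zipperPhi_fixed_affine_branch
    hx₁.1 hx hx₂.2 hy₁.1.le hy hy₂.2.le hlam hZ₀ hZ₁ hfix
  obtain ⟨ℓ, hℓ⟩ := exists_pow_lt_mul_rpow_pow hh₀ hh₁ hC hβ.2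
  obtain ⟨a, ha, hah, hosc⟩ := exists_Icc_abs_sub_le_pow_of_affine_comp hZ hh₀ ht hth hrec ℓ
  refine ⟨a, a + h ^ ℓ, ha, le_add_of_nonneg_right (pow_nonneg hh₀.le ℓ), hah, ?_⟩
  calc (volume (Z '' Icc a (a + h ^ ℓ))).toReal ≤ |σ| ^ ℓ :=
        volume_toReal_le_of_forall_abs_sub_le (by positivity) <| by
          simpa only [forall_mem_image] using hosc
    _ ≤ h ^ ℓ := pow_le_pow_left₀ (abs_nonneg σ) hσ ℓ
    _ < C * (h ^ ℓ) ^ β := hℓ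
    _ = C * (a + h ^ ℓ - a) ^ β := by rw [add_sub_cancel_left]
end

section
/- If λ_min := min(y₁/x₁, (y₁-y₂)/(x₂-x₁), (1-y₂)/(1-x₂)) > 1, then the zipper map Z_p is β-hypersensitive with exponent β = 1 + log λ_min / log h_min ∈ (0,1) and constant C = h_min/2, where h_min = min(x₁, x₂-x₁, 1-x₂): that is, |Z_p(A)| ≥ (h_min/2)·|A|^β for every interval A ⊆ [0,1]. -/
open Set MeasureTheory

/-!
By the fixed-point equation, on each cell `[u, u + w]` of the partition `0 < x₁ < x₂ < 1` the
map `Z` is an affine copy of `Z|[0,1]` with vertical ratio `r ≥ λ_min w ≥ w ^ β`; the last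
inequality is the choice of `β`, which makes `h_min ^ (β - 1) = λ_min`. Hence a lower bound
`C ℓ ^ β` for the oscillation of `Z` over intervals of length `ℓ` passes from an interval of
`[0, 1]` to its image in a cell. An interval inside one cell is so reduced to an interval longer
by a factor at least `1 / (1 - h_min)`, which terminates. An interval meeting `x₁` or `x₂` has a
piece of at least half its length that either contains a whole cell (over which `Z` oscillates
by `r ≥ h_min`) or lies in one cell and shares an endpoint with it; the latter is handled by the
same rescaling, and halving costs only `2 ^ β ≤ 2`. By continuity, `Z '' [a, b]` contains an
interval as long as any oscillation of `Z` on `[a, b]`.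
-/

def SpreadsOn (Z : ℝ → ℝ) (C β a b : ℝ) : Prop :=
  ∃ c ∈ Icc a b, ∃ d ∈ Icc a b, C * (b - a) ^ β ≤ |Z d - Z c|

section SpreadsOn

variable {Z : ℝ → ℝ} {C K β a b : ℝ}

theorem spreadsOn_self (hβ : β ≠ 0) : SpreadsOn Z C β a a :=
  ⟨a, left_mem_Icc.2 le_rfl, a, left_mem_Icc.2 le_rfl, by simp [Real.zero_rpow hβ]⟩

theorem SpreadsOn.mono {C' a' b' : ℝ} (h : SpreadsOn Z C' β a' b') (ha : a ≤ a') (hb : b' ≤ b)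
    (hC : C * (b - a) ^ β ≤ C' * (b' - a') ^ β) : SpreadsOn Z C β a b := by
  obtain ⟨c, hc, d, hd, hcd⟩ := h
  exact ⟨c, ⟨ha.trans hc.1, hc.2.trans hb⟩, d, ⟨ha.trans hd.1, hd.2.trans hb⟩, hC.trans hcd⟩

theorem half_mul_rpow_le {ℓ m : ℝ} (hK : 0 ≤ K) (hβ₀ : 0 ≤ β) (hβ₁ : β ≤ 1) (hℓ : 0 ≤ ℓ)
    (hℓm : ℓ ≤ 2 * m) : K / 2 * ℓ ^ β ≤ K * m ^ β := by
  have hm : 0 ≤ m := by linarith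
  have h2 : (2 : ℝ) ^ β ≤ 2 := by
    simpa using Real.rpow_le_rpow_of_exponent_le one_le_two hβ₁
  calc K / 2 * ℓ ^ β ≤ K / 2 * (2 ^ β * m ^ β) := by
        rw [← Real.mul_rpow zero_le_two hm]; gcongr
    _ ≤ K / 2 * (2 * m ^ β) := by gcongr
    _ = K * m ^ β := by ring

theorem SpreadsOn.half_left {p : ℝ} (h : SpreadsOn Z K β a p) (hK : 0 ≤ K) (hβ₀ : 0 ≤ β)
    (hβ₁ : β ≤ 1) (hap : a ≤ p) (hpb : p ≤ b) (hlen : b - a ≤ 2 * (p - a)) :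
    SpreadsOn Z (K / 2) β a b :=
  h.mono le_rfl hpb (half_mul_rpow_le hK hβ₀ hβ₁ (by linarith) hlen)

theorem SpreadsOn.half_right {p : ℝ} (h : SpreadsOn Z K β p b) (hK : 0 ≤ K) (hβ₀ : 0 ≤ β)
    (hβ₁ : β ≤ 1) (hap : a ≤ p) (hpb : p ≤ b) (hlen : b - a ≤ 2 * (b - p)) :
    SpreadsOn Z (K / 2) β a b :=
  h.mono hap le_rfl (half_mul_rpow_le hK hβ₀ hβ₁ (by linarith) hlen)

theorem SpreadsOn.le_volume_image (h : SpreadsOn Z C β a b) (hZ : ContinuousOn Z (Icc a b)) :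
    C * (b - a) ^ β ≤ (volume (Z '' Icc a b)).toReal := by
  obtain ⟨c, hc, d, hd, hcd⟩ := h
  have hsub : uIcc (Z c) (Z d) ⊆ Z '' Icc a b :=
    (intermediate_value_uIcc (hZ.mono (uIcc_subset_Icc hc hd))).trans
      (image_mono (uIcc_subset_Icc hc hd))
  have hfin : volume (Z '' Icc a b) ≠ ⊤ :=
    (isCompact_Icc.image_of_continuousOn hZ).measure_lt_top.ne
  calc C * (b - a) ^ β ≤ |Z d - Z c| := hcd
    _ = (volume (uIcc (Z c) (Z d))).toReal := by
        rw [Real.volume_interval, ENNReal.toReal_ofReal (abs_nonneg _)]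
    _ ≤ (volume (Z '' Icc a b)).toReal := ENNReal.toReal_mono hfin (measure_mono hsub)

end SpreadsOn

def IsExpandingCell (Z : ℝ → ℝ) (β u w : ℝ) : Prop :=
  ∃ r, w ^ β ≤ r ∧ ∀ c ∈ Icc (0 : ℝ) 1, ∀ d ∈ Icc (0 : ℝ) 1,
    |Z (u + w * d) - Z (u + w * c)| = r * |Z d - Z c|

namespace IsExpandingCell

variable {Z : ℝ → ℝ} {C β u w a b : ℝ}

theorem of_affine {v s : ℝ} (h : ∀ t ∈ Icc (0 : ℝ) 1, Z (u + w * t) = v + s * Z t)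
    (hs : w ^ β ≤ |s|) : IsExpandingCell Z β u w :=
  ⟨|s|, hs, fun c hc d hd => by rw [h c hc, h d hd, ← abs_mul]; ring_nf⟩

theorem spreadsOn_image (hc : IsExpandingCell Z β u w) (hw : 0 < w) (hC : 0 ≤ C)
    (ha : 0 ≤ a) (hb : b ≤ 1) (h : SpreadsOn Z C β a b) :
    SpreadsOn Z C β (u + w * a) (u + w * b) := by
  obtain ⟨r, hr, hZ⟩ := hc
  obtain ⟨c, hc, d, hd, hcd⟩ := h
  have hab : 0 ≤ b - a := by linarith [hc.1, hc.2]
  have hmem {t : ℝ} (ht : t ∈ Icc a b) : u + w * t ∈ Icc (u + w * a) (u + w * b) :=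
    ⟨by nlinarith [ht.1], by nlinarith [ht.2]⟩
  refine ⟨_, hmem hc, _, hmem hd, ?_⟩
  rw [hZ c ⟨ha.trans hc.1, hc.2.trans hb⟩ d ⟨ha.trans hd.1, hd.2.trans hb⟩]
  calc C * (u + w * b - (u + w * a)) ^ β = w ^ β * (C * (b - a) ^ β) := by
        rw [show u + w * b - (u + w * a) = w * (b - a) by ring, Real.mul_rpow hw.le hab]; ring
    _ ≤ r * |Z d - Z c| := mul_le_mul hr hcd (by positivity) ((by positivity : 0 ≤ w ^ β).trans hr)

theorem spreadsOn_of_preimage (hc : IsExpandingCell Z β u w) (hw : 0 < w) (hC : 0 ≤ C)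
    (hua : u ≤ a) (hbw : b ≤ u + w)
    (h : SpreadsOn Z C β ((a - u) / w) ((b - u) / w)) : SpreadsOn Z C β a b := by
  have := hc.spreadsOn_image hw hC (div_nonneg (sub_nonneg.2 hua) hw.le)
    ((div_le_one hw).2 (by linarith)) h
  rwa [mul_div_cancel₀ _ hw.ne', mul_div_cancel₀ _ hw.ne', add_sub_cancel,
    add_sub_cancel] at this

theorem spreadsOn_of_rescaled {H : ℝ} (hc : IsExpandingCell Z β u w) (hw : 0 < w) (hC : 0 ≤ C)
    (hwH : w ≤ H) (hua : u ≤ a) (hab : a ≤ b) (hbw : b ≤ u + w)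
    (h : ∀ a' b', (b - a) / H ≤ b' - a' → 0 ≤ a' → b' ≤ 1 → SpreadsOn Z C β a' b') :
    SpreadsOn Z C β a b :=
  hc.spreadsOn_of_preimage hw hC hua hbw <|
    h _ _ (by rw [div_sub_div_same, sub_sub_sub_cancel_right]; gcongr)
      (div_nonneg (sub_nonneg.2 hua) hw.le) ((div_le_one hw).2 (by linarith))

end IsExpandingCell

theorem scale_induction {H : ℝ} (hH₀ : 0 < H) (hH₁ : H < 1) {P : ℝ → Prop}
    (large : ∀ ℓ, 1 < ℓ → P ℓ) (step : ∀ ℓ, 0 < ℓ → (∀ ℓ', ℓ / H ≤ ℓ' → P ℓ') → P ℓ) :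
    ∀ ℓ, 0 < ℓ → P ℓ := by
  have key : ∀ n : ℕ, ∀ ℓ, 0 < ℓ → 1 < ℓ / H ^ n → P ℓ := by
    intro n
    induction n with
    | zero => intro ℓ _ hℓ; exact large ℓ (by simpa using hℓ)
    | succ n ih =>
      intro ℓ hℓ hℓn
      refine step ℓ hℓ fun ℓ' hℓ' => ?_
      have hpos : 0 < ℓ / H := by positivity
      refine ih ℓ' (hpos.trans_le hℓ') (hℓn.trans_le ?_)
      rw [pow_succ', ← div_div]
      gcongr
  intro ℓ hℓ
  obtain ⟨n, hn⟩ := exists_pow_lt_of_lt_one hℓ hH₁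
  exact key n ℓ hℓ ((one_lt_div (by positivity)).2 hn)

structure IsExpandingSplit (Z : ℝ → ℝ) (β K x₁ x₂ : ℝ) : Prop where
  const_pos : 0 < K
  exponent_pos : 0 < β
  exponent_le_one : β ≤ 1
  map_zero : Z 0 = 0
  map_one : Z 1 = 1
  const_le_left : K ≤ x₁
  const_le_mid : K ≤ x₂ - x₁
  const_le_right : K ≤ 1 - x₂
  left : IsExpandingCell Z β 0 x₁
  mid : IsExpandingCell Z β x₁ (x₂ - x₁)
  right : IsExpandingCell Z β x₂ (1 - x₂)

namespace IsExpandingSplit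

variable {Z : ℝ → ℝ} {β K x₁ x₂ u w a b : ℝ}

theorem const_lt_one (hZ : IsExpandingSplit Z β K x₁ x₂) : K < 1 := by
  linarith [hZ.const_pos, hZ.const_le_left, hZ.const_le_mid, hZ.const_le_right]

theorem spreadsOn_of_cell_subset (hZ : IsExpandingSplit Z β K x₁ x₂)
    (hc : IsExpandingCell Z β u w) (hKw : K ≤ w) (hau : a ≤ u) (hwb : u + w ≤ b)
    (hab : b - a ≤ 1) : SpreadsOn Z K β a b := by
  obtain ⟨r, hr, hZr⟩ := hc
  have hK := hZ.const_pos
  have hβ := hZ.exponent_pos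
  have hr_eq : |Z (u + w) - Z u| = r := by
    simpa [hZ.map_zero, hZ.map_one] using hZr 0 (by simp) 1 (by simp)
  refine ⟨u, ⟨hau, by linarith⟩, u + w, ⟨by linarith, hwb⟩, ?_⟩
  calc K * (b - a) ^ β ≤ K * 1 := by
        gcongr; exact Real.rpow_le_one (by linarith) hab hβ.le
    _ ≤ w := by linarith
    _ ≤ w ^ β := Real.self_le_rpow_of_le_one (by linarith) (by linarith) hZ.exponent_le_one
    _ ≤ |Z (u + w) - Z u| := hr_eq ▸ hr

theorem spreadsOn_zero_left (hZ : IsExpandingSplit Z β K x₁ x₂) (hb₀ : 0 < b) (hb₁ : b ≤ 1) :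
    SpreadsOn Z K β 0 b := by
  have hK := hZ.const_pos
  have hx₁ := hZ.const_le_left
  revert hb₁
  refine scale_induction (P := fun ℓ => ℓ ≤ 1 → SpreadsOn Z K β 0 ℓ)
    (sub_pos.2 hZ.const_lt_one) (by linarith) (fun ℓ hℓ hℓ₁ => by linarith)
    (fun ℓ hℓ ih hℓ₁ => ?_) b hb₀
  rcases le_or_gt x₁ ℓ with hxℓ | hℓx
  · exact hZ.spreadsOn_of_cell_subset hZ.left hx₁ le_rfl (by simpa using hxℓ)
      (by simpa using hℓ₁)
  · refine hZ.left.spreadsOn_of_preimage (by linarith) hK.le le_rfl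
      (by simpa using hℓx.le) ?_
    simpa using ih (ℓ / x₁)
      (div_le_div_of_nonneg_left hℓ.le (by linarith)
        (by linarith [hZ.const_le_mid, hZ.const_le_right]))
      ((div_le_one (by linarith)).2 hℓx.le)

theorem spreadsOn_right_one (hZ : IsExpandingSplit Z β K x₁ x₂) (ha₀ : 0 ≤ a) (ha₁ : a < 1) :
    SpreadsOn Z K β a 1 := by
  have hK := hZ.const_pos
  have hx₂ := hZ.const_le_right
  have key := scale_induction (P := fun ℓ => 0 ≤ 1 - ℓ → SpreadsOn Z K β (1 - ℓ) 1)
    (sub_pos.2 hZ.const_lt_one) (by linarith) (fun ℓ hℓ hℓ₁ => by linarith)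
    (fun ℓ hℓ ih hℓ₁ => ?_) (1 - a) (by linarith) (by linarith)
  · rwa [sub_sub_cancel] at key
  rcases le_or_gt (1 - ℓ) x₂ with hℓx | hxℓ
  · exact hZ.spreadsOn_of_cell_subset hZ.right hx₂ hℓx (by linarith) (by linarith)
  · refine hZ.right.spreadsOn_of_preimage (by linarith) hK.le hxℓ.le (by linarith) ?_
    have hw : 0 < 1 - x₂ := by linarith
    convert ih (ℓ / (1 - x₂))
      (div_le_div_of_nonneg_left hℓ.le hw (by linarith [hZ.const_le_left, hZ.const_le_mid]))
      (by rw [sub_nonneg, div_le_one hw]; linarith) using 1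
    · field_simp; ring
    · field_simp

theorem spreadsOn_cell_start (hZ : IsExpandingSplit Z β K x₁ x₂) (hc : IsExpandingCell Z β u w)
    (hw : 0 < w) (hub : u < b) (hbw : b ≤ u + w) : SpreadsOn Z K β u b :=
  hc.spreadsOn_of_preimage hw hZ.const_pos.le le_rfl hbw <| by
    simpa using hZ.spreadsOn_zero_left (div_pos (sub_pos.2 hub) hw)
      ((div_le_one hw).2 (by linarith))

theorem spreadsOn_cell_end (hZ : IsExpandingSplit Z β K x₁ x₂) (hc : IsExpandingCell Z β u w)
    (hw : 0 < w) (hua : u ≤ a) (haw : a < u + w) : SpreadsOn Z K β a (u + w) :=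
  hc.spreadsOn_of_preimage hw hZ.const_pos.le hua le_rfl <| by
    rw [add_sub_cancel_left, div_self hw.ne']
    exact hZ.spreadsOn_right_one (div_nonneg (sub_nonneg.2 hua) hw.le)
      ((div_lt_one hw).2 (by linarith))

theorem spreadsOn_across_x₁ (hZ : IsExpandingSplit Z β K x₁ x₂) (ha₀ : 0 ≤ a) (hax : a < x₁)
    (hxb : x₁ < b) (hb₁ : b ≤ 1) : SpreadsOn Z (K / 2) β a b := by
  have hK := hZ.const_pos
  have hβ₀ := hZ.exponent_pos.le
  have hβ₁ := hZ.exponent_le_one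
  by_cases hlen : b - a ≤ 2 * (x₁ - a)
  · have h := hZ.spreadsOn_cell_end hZ.left (hK.trans_le hZ.const_le_left) ha₀ (by simpa using hax)
    rw [zero_add] at h
    exact h.half_left hK.le hβ₀ hβ₁ hax.le hxb.le hlen
  · have hmid : 0 < x₂ - x₁ := hK.trans_le hZ.const_le_mid
    have h : SpreadsOn Z K β x₁ b := by
      rcases le_or_gt b x₂ with hbx | hxb₂
      · exact hZ.spreadsOn_cell_start hZ.mid hmid hxb (by linarith)
      · exact hZ.spreadsOn_of_cell_subset hZ.mid hZ.const_le_mid le_rfl (by linarith)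
          (by linarith)
    exact h.half_right hK.le hβ₀ hβ₁ hax.le hxb.le (by linarith)

theorem spreadsOn_across_x₂ (hZ : IsExpandingSplit Z β K x₁ x₂) (hxa : x₁ ≤ a) (hax : a < x₂)
    (hxb : x₂ < b) (hb₁ : b ≤ 1) : SpreadsOn Z (K / 2) β a b := by
  have hK := hZ.const_pos
  have hβ₀ := hZ.exponent_pos.le
  have hβ₁ := hZ.exponent_le_one
  by_cases hlen : b - a ≤ 2 * (x₂ - a)
  · have h := hZ.spreadsOn_cell_end hZ.mid (hK.trans_le hZ.const_le_mid) hxa (by simpa using hax)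
    rw [add_sub_cancel] at h
    exact h.half_left hK.le hβ₀ hβ₁ hax.le hxb.le hlen
  · have h := hZ.spreadsOn_cell_start hZ.right (hK.trans_le hZ.const_le_right) hxb
      (by simpa using hb₁)
    exact h.half_right hK.le hβ₀ hβ₁ hax.le hxb.le (by linarith)

theorem spreadsOn (hZ : IsExpandingSplit Z β K x₁ x₂) (ha : 0 ≤ a) (hab : a ≤ b) (hb : b ≤ 1) :
    SpreadsOn Z (K / 2) β a b := by
  rcases hab.eq_or_lt with rfl | hab
  · exact spreadsOn_self hZ.exponent_pos.ne'
  have hK := hZ.const_pos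
  have hK₂ : 0 ≤ K / 2 := by positivity
  have hx₁ := hZ.const_le_left
  have hx₁₂ := hZ.const_le_mid
  have hx₂ := hZ.const_le_right
  have key := scale_induction
    (P := fun ℓ => ∀ a b, b - a = ℓ → 0 ≤ a → b ≤ 1 → SpreadsOn Z (K / 2) β a b)
    (sub_pos.2 hZ.const_lt_one) (by linarith) (fun ℓ hℓ a b hab ha hb => by linarith) ?_
    (b - a) (sub_pos.2 hab) a b rfl ha hb
  · exact key
  rintro ℓ hℓ ih a b rfl ha hb
  have rescaled (a' b' : ℝ) (hlen : (b - a) / (1 - K) ≤ b' - a') :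
      0 ≤ a' → b' ≤ 1 → SpreadsOn Z (K / 2) β a' b' :=
    ih _ hlen a' b' rfl
  have hab : a ≤ b := by linarith
  rcases le_or_gt b x₁ with hbx₁ | hx₁b
  · exact hZ.left.spreadsOn_of_rescaled (by linarith) hK₂ (by linarith) ha hab
      (by simpa using hbx₁) rescaled
  rcases lt_or_ge a x₁ with hax₁ | hx₁a
  · exact hZ.spreadsOn_across_x₁ ha hax₁ hx₁b hb
  rcases le_or_gt x₂ a with hx₂a | hax₂
  · exact hZ.right.spreadsOn_of_rescaled (by linarith) hK₂ (by linarith) hx₂a hab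
      (by linarith) rescaled
  rcases le_or_gt b x₂ with hbx₂ | hx₂b
  · exact hZ.mid.spreadsOn_of_rescaled (by linarith) hK₂ (by linarith) hx₁a hab
      (by linarith) rescaled
  · exact hZ.spreadsOn_across_x₂ hx₁a hax₂ hx₂b hb

end IsExpandingSplit

section Zipper

variable {x₁ y₁ x₂ y₂ t : ℝ} {Z : ℝ → ℝ}

theorem zipper_apply_left (hx₁ : 0 < x₁) (hx₁' : x₁ ≤ 1)
    (hfix : EqOn (zipperPhi x₁ y₁ x₂ y₂ Z) Z (Icc 0 1)) (ht : t ∈ Icc (0 : ℝ) 1) :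
    Z (x₁ * t) = y₁ * Z t := by
  have hle : x₁ * t ≤ x₁ := mul_le_of_le_one_right hx₁.le ht.2
  rw [← hfix ⟨mul_nonneg hx₁.le ht.1, hle.trans hx₁'⟩, zipperPhi, if_pos hle,
    mul_div_cancel_left₀ _ hx₁.ne']

theorem zipper_apply_mid (hx₁ : 0 < x₁) (hx : x₁ < x₂) (hx₂ : x₂ ≤ 1) (hZ₀ : Z 0 = 0)
    (hZ₁ : Z 1 = 1) (hfix : EqOn (zipperPhi x₁ y₁ x₂ y₂ Z) Z (Icc 0 1)) (ht : t ∈ Icc (0 : ℝ) 1) :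
    Z (x₁ + (x₂ - x₁) * t) = y₁ + -(y₁ - y₂) * Z t := by
  rcases ht.1.eq_or_lt with rfl | ht₀
  · simpa [hZ₀, hZ₁] using
      zipper_apply_left hx₁ (by linarith) hfix (right_mem_Icc.2 zero_le_one)
  have hd : 0 < x₂ - x₁ := sub_pos.2 hx
  have hle : (x₂ - x₁) * t ≤ x₂ - x₁ := mul_le_of_le_one_right hd.le ht.2
  have hpos : 0 < (x₂ - x₁) * t := mul_pos hd ht₀
  rw [← hfix ⟨by linarith, by linarith⟩, zipperPhi, if_neg (by linarith), if_pos (by linarith),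
    add_sub_cancel_left, mul_div_cancel_left₀ _ hd.ne']
  ring

theorem zipper_apply_right (hx₁ : 0 < x₁) (hx : x₁ < x₂) (hx₂ : x₂ < 1) (hZ₀ : Z 0 = 0)
    (hZ₁ : Z 1 = 1) (hfix : EqOn (zipperPhi x₁ y₁ x₂ y₂ Z) Z (Icc 0 1)) (ht : t ∈ Icc (0 : ℝ) 1) :
    Z (x₂ + (1 - x₂) * t) = y₂ + (1 - y₂) * Z t := by
  rcases ht.1.eq_or_lt with rfl | ht₀
  · have h := zipper_apply_mid hx₁ hx hx₂.le hZ₀ hZ₁ hfix (right_mem_Icc.2 zero_le_one)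
    rw [mul_one, add_sub_cancel, hZ₁] at h
    rw [mul_zero, add_zero, h, hZ₀]
    ring
  have hd : 0 < 1 - x₂ := sub_pos.2 hx₂
  have hle : (1 - x₂) * t ≤ 1 - x₂ := mul_le_of_le_one_right hd.le ht.2
  have hpos : 0 < (1 - x₂) * t := mul_pos hd ht₀
  rw [← hfix ⟨by linarith, by linarith⟩, zipperPhi, if_neg (by linarith), if_neg (by linarith),
    add_sub_cancel_left, mul_div_cancel_left₀ _ hd.ne']

end Zipper

theorem one_add_log_div_log_mem_Ioo {s m : ℝ} (hm : 0 < m) (hs : 1 < s) (hsm : s * m < 1) :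
    1 + Real.log s / Real.log m ∈ Ioo 0 1 := by
  have hlm : Real.log m < 0 := Real.log_neg hm (by nlinarith)
  have hls : 0 < Real.log s := Real.log_pos hs
  have hsum : Real.log s + Real.log m < 0 := by
    rw [← Real.log_mul (by positivity) hm.ne']
    exact Real.log_neg (by positivity) hsm
  have hgt : -1 < Real.log s / Real.log m := by
    rw [lt_div_iff_of_neg hlm]; linarith
  exact ⟨by linarith, by linarith [div_neg_of_pos_of_neg hls hlm]⟩

theorem rpow_one_add_log_div_log_le {s m w r : ℝ} (hm : 0 < m) (hm₁ : m ≠ 1) (hs : 0 < s)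
    (he : Real.log s / Real.log m ≤ 0) (hmw : m ≤ w) (hr : s * w ≤ r) :
    w ^ (1 + Real.log s / Real.log m) ≤ r := by
  have hw : 0 < w := hm.trans_le hmw
  have hms : m ^ (Real.log s / Real.log m) = s := Real.rpow_logb hm hm₁ hs
  calc w ^ (1 + Real.log s / Real.log m) = w * w ^ (Real.log s / Real.log m) := by
        rw [Real.rpow_add hw, Real.rpow_one]
    _ ≤ w * m ^ (Real.log s / Real.log m) :=
        mul_le_mul_of_nonneg_left (Real.rpow_le_rpow_of_nonpos hm hmw he) hw.le
    _ = s * w := by rw [hms, mul_comm]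
    _ ≤ r := hr

/-- If λ_min > 1, the zipper map Z_p is β-hypersensitive with
β = 1 + log λ_min / log h_min ∈ (0,1) and constant h_min/2. -/
theorem zipper_hypersensitive (x₁ y₁ x₂ y₂ : ℝ)
    (hx₁ : x₁ ∈ Ioo (0:ℝ) 1) (hy₁ : y₁ ∈ Ioo (0:ℝ) 1)
    (hx₂ : x₂ ∈ Ioo (0:ℝ) 1) (hy₂ : y₂ ∈ Ioo (0:ℝ) 1)
    (hx : x₁ < x₂) (hy : y₂ < y₁)
    (hlam : 1 < min (y₁ / x₁) (min ((y₁ - y₂) / (x₂ - x₁)) ((1 - y₂) / (1 - x₂))))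
    (Z : ℝ → ℝ) (hZ : IsC00 Z) (hfix : EqOn (zipperPhi x₁ y₁ x₂ y₂ Z) Z (Icc 0 1)) :
    (1 + Real.log (min (y₁ / x₁) (min ((y₁ - y₂) / (x₂ - x₁)) ((1 - y₂) / (1 - x₂)))) /
        Real.log (min x₁ (min (x₂ - x₁) (1 - x₂))) ∈ Ioo (0:ℝ) 1) ∧
    ∀ a b : ℝ, 0 ≤ a → a ≤ b → b ≤ 1 →
      min x₁ (min (x₂ - x₁) (1 - x₂)) / 2 *
        (b - a) ^ (1 + Real.log (min (y₁ / x₁) (min ((y₁ - y₂) / (x₂ - x₁)) ((1 - y₂) / (1 - x₂)))) /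
          Real.log (min x₁ (min (x₂ - x₁) (1 - x₂)))) ≤
      (volume (Z '' Icc a b)).toReal := by
  obtain ⟨hZc, -, hZ₀, hZ₁⟩ := hZ
  set s := min (y₁ / x₁) (min ((y₁ - y₂) / (x₂ - x₁)) ((1 - y₂) / (1 - x₂)))
  set m := min x₁ (min (x₂ - x₁) (1 - x₂))
  have hd₁ : 0 < x₂ - x₁ := sub_pos.2 hx
  have hd₂ : 0 < 1 - x₂ := sub_pos.2 hx₂.2
  have hs_left : s * x₁ ≤ y₁ := (le_div_iff₀ hx₁.1).1 (min_le_left _ _)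
  have hs_mid : s * (x₂ - x₁) ≤ y₁ - y₂ :=
    (le_div_iff₀ hd₁).1 ((min_le_right _ _).trans (min_le_left _ _))
  have hs_right : s * (1 - x₂) ≤ 1 - y₂ :=
    (le_div_iff₀ hd₂).1 ((min_le_right _ _).trans (min_le_right _ _))
  have hm_left : m ≤ x₁ := min_le_left _ _
  have hm_mid : m ≤ x₂ - x₁ := (min_le_right _ _).trans (min_le_left _ _)
  have hm_right : m ≤ 1 - x₂ := (min_le_right _ _).trans (min_le_right _ _)
  have hm : 0 < m := lt_min hx₁.1 (lt_min hd₁ hd₂)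
  have hβ := one_add_log_div_log_mem_Ioo hm hlam (by nlinarith [hy₁.2])
  have hgain {w r : ℝ} (hw : m ≤ w) (hr : s * w ≤ r) :=
    rpow_one_add_log_div_log_le hm (by linarith [hx₁.2]) (by linarith) (by linarith [hβ.2]) hw hr
  have hsplit : IsExpandingSplit Z _ m x₁ x₂ :=
    { const_pos := hm, exponent_pos := hβ.1, exponent_le_one := hβ.2.le
      map_zero := hZ₀, map_one := hZ₁
      const_le_left := hm_left, const_le_mid := hm_mid, const_le_right := hm_right
      left := .of_affine (v := 0)
        (fun t ht => by simpa using zipper_apply_left hx₁.1 hx₁.2.le hfix ht)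
        (by rw [abs_of_pos hy₁.1]; exact hgain hm_left hs_left)
      mid := .of_affine (fun t => zipper_apply_mid hx₁.1 hx hx₂.2.le hZ₀ hZ₁ hfix)
        (by rw [abs_neg, abs_of_pos (sub_pos.2 hy)]; exact hgain hm_mid hs_mid)
      right := .of_affine (fun t => zipper_apply_right hx₁.1 hx hx₂.2 hZ₀ hZ₁ hfix)
        (by rw [abs_of_pos (sub_pos.2 hy₂.2)]; exact hgain hm_right hs_right) }
  exact ⟨hβ, fun a b ha hab hb =>
    (hsplit.spreadsOn ha hab hb).le_volume_image (hZc.mono (Icc_subset_Icc ha hb))⟩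
end

section
/- Let V_0(y)=y₁y and V_2(y)=y₂+(1-y₂)y with (y₁,y₂) ∈ B = {(y₁,y₂)∈(0,1)² : y₁² > y₂ and y₁ > (2-y₂)y₂}, and let S be the operator Sf(x) = f(x/y₁) + f((x-y₂)/(1-y₂)) acting on bounded functions ℝ→ℝ. Then for every ε>0 there exist δ>0 and n∈ℕ such that Sⁿ𝟙_{[δ,1-δ]} ≥ 2·𝟙_{[ε,1-ε]} pointwise. -/
open Set

/-- The transfer-type operator S f(x) = f(x/y₁) + f((x-y₂)/(1-y₂)). -/
noncomputable def zipS (y₁ y₂ : ℝ) (f : ℝ → ℝ) : ℝ → ℝ := fun x =>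
  f (x / y₁) + f ((x - y₂) / (1 - y₂))

open Filter Topology

/-!
Write `V₀ t = y₁ t` and `V₂ t = y₂ + (1 - y₂) t`, so that
`S 𝟙[p, q] = 𝟙[V₀ p, V₀ q] + 𝟙[V₂ p, V₂ q]`. We track two intervals `[A, B]` and `[a, b]` with
`𝟙[A, B] + 𝟙[a, b] ≤ Sᵏ f`. If the images `V₀[A, B]` and `V₂[A, B]` overlap, and each of
`V₀[a, b]`, `V₂[a, b]` meets that overlap, then the four image intervals cover `[V₀ A, V₂ B]`
and `[V₀ a, V₂ b]` once each, so the invariant passes to `(V₀ A, V₂ B, V₀ a, V₂ b)`. Left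
endpoints then shrink geometrically to `0` and right endpoints to `1`, which only makes the overlap
conditions easier. They hold at the start, for `[A, B] = [V₀ δ, V₂ (1 - δ)]` and
`[a, b] = [V₂ δ, V₀ (1 - δ)]` (read off from `S 𝟙[δ, 1 - δ]`), as soon as `δ` is small,
since at `δ = 0` they are the strict inequalities defining `B`.
-/

local notation "𝟙[" p ", " q "]" => indicator (Icc p q) (fun _ => (1 : ℝ))

section IntervalIndicators

variable {p q r s p' q' r' s' : ℝ}

lemma indicator_Icc_add_indicator_Icc_le_exchange (hpr : p ≤ r) (hrq : r ≤ q) :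
    𝟙[p, s] + 𝟙[r, q] ≤ 𝟙[p, q] + 𝟙[r, s] := by
  intro x
  simp only [Pi.add_apply, indicator_apply, mem_Icc]
  grind

lemma indicator_Icc_add_indicator_Icc_le_of_overlaps (hpr : p ≤ r) (hrq : r ≤ q) (hqs : q ≤ s)
    (hrq' : r ≤ q') (hr'q : r' ≤ q) :
    𝟙[p, s] + 𝟙[p', s'] ≤ 𝟙[p, q] + 𝟙[r, s] + (𝟙[p', q'] + 𝟙[r', s']) := by
  intro x
  simp only [Pi.add_apply, indicator_apply, mem_Icc]
  grind

lemma two_mul_indicator_Icc_le_add (hp : p ≤ r) (hp' : p' ≤ r) (hq : s ≤ q) (hq' : s ≤ q')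
    (x : ℝ) : 2 * 𝟙[r, s] x ≤ (𝟙[p, q] + 𝟙[p', q']) x := by
  rw [two_mul]
  exact add_le_add
    (indicator_le_indicator_of_subset (Icc_subset_Icc hp hq) (fun _ => zero_le_one) x)
    (indicator_le_indicator_of_subset (Icc_subset_Icc hp' hq') (fun _ => zero_le_one) x)

end IntervalIndicators

section zipS

variable {y₁ y₂ : ℝ}

lemma mul_le_add_one_sub_mul (hy₁ : y₁ ≤ 1) (hy₂ : 0 ≤ y₂) {t : ℝ} (ht₀ : 0 ≤ t) (ht₁ : t ≤ 1) :
    y₁ * t ≤ y₂ + (1 - y₂) * t := by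
  nlinarith

lemma zipS_add (f g : ℝ → ℝ) : zipS y₁ y₂ (f + g) = zipS y₁ y₂ f + zipS y₁ y₂ g := by
  funext x
  simp only [zipS, Pi.add_apply]
  ring

lemma zipS_mono {f g : ℝ → ℝ} (h : f ≤ g) : zipS y₁ y₂ f ≤ zipS y₁ y₂ g :=
  fun _ => add_le_add (h _) (h _)

lemma zipS_indicator_Icc (hy₁ : 0 < y₁) (hy₂ : y₂ < 1) (p q : ℝ) :
    zipS y₁ y₂ 𝟙[p, q] = 𝟙[y₁ * p, y₁ * q] + 𝟙[y₂ + (1 - y₂) * p, y₂ + (1 - y₂) * q] := by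
  have h₂ : 0 < 1 - y₂ := sub_pos.2 hy₂
  funext x
  have h₀ : x / y₁ ∈ Icc p q ↔ x ∈ Icc (y₁ * p) (y₁ * q) := by
    simp only [mem_Icc, le_div_iff₀ hy₁, div_le_iff₀ hy₁, mul_comm]
  have h₂' : (x - y₂) / (1 - y₂) ∈ Icc p q ↔ x ∈ Icc (y₂ + (1 - y₂) * p) (y₂ + (1 - y₂) * q) := by
    simp only [mem_Icc, le_div_iff₀ h₂, div_le_iff₀ h₂]
    constructor <;> rintro ⟨h, h'⟩ <;> constructor <;> linarith
  simp only [zipS, Pi.add_apply, indicator_apply, h₀, h₂']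

lemma indicator_pair_le_zipS_indicator_Icc (hy₁ : 0 < y₁) (hy₂ : y₂ < 1) {p q : ℝ}
    (hp : y₁ * p ≤ y₂ + (1 - y₂) * p) (hpq : y₂ + (1 - y₂) * p ≤ y₁ * q) :
    𝟙[y₁ * p, y₂ + (1 - y₂) * q] + 𝟙[y₂ + (1 - y₂) * p, y₁ * q] ≤ zipS y₁ y₂ 𝟙[p, q] := by
  rw [zipS_indicator_Icc hy₁ hy₂]
  exact indicator_Icc_add_indicator_Icc_le_exchange hp hpq

lemma indicator_pair_le_zipS (hy₁ : y₁ ∈ Ioc 0 1) (hy₂ : y₂ ∈ Ico 0 1) {f : ℝ → ℝ}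
    {A B a b : ℝ} (hA : 0 ≤ A) (hB : B ≤ 1) (hf : 𝟙[A, B] + 𝟙[a, b] ≤ f)
    (hAB : y₂ + (1 - y₂) * A ≤ y₁ * B)
    (hAb : y₂ + (1 - y₂) * A ≤ y₁ * b) (haB : y₂ + (1 - y₂) * a ≤ y₁ * B) :
    𝟙[y₁ * A, y₂ + (1 - y₂) * B] + 𝟙[y₁ * a, y₂ + (1 - y₂) * b] ≤ zipS y₁ y₂ f := by
  have hB₀ : 0 ≤ B := le_of_mul_le_mul_left
    (by linarith [hy₂.1, mul_nonneg (sub_nonneg.2 hy₂.2.le) hA] : y₁ * 0 ≤ y₁ * B) hy₁.1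
  have hA₁ : A ≤ 1 := le_of_mul_le_mul_left
    (by nlinarith [mul_le_of_le_one_left hB₀ hy₁.2] : (1 - y₂) * A ≤ (1 - y₂) * 1)
    (sub_pos.2 hy₂.2)
  calc _ ≤ 𝟙[y₁ * A, y₁ * B] + 𝟙[y₂ + (1 - y₂) * A, y₂ + (1 - y₂) * B] +
        (𝟙[y₁ * a, y₁ * b] + 𝟙[y₂ + (1 - y₂) * a, y₂ + (1 - y₂) * b]) :=
        indicator_Icc_add_indicator_Icc_le_of_overlaps
          (mul_le_add_one_sub_mul hy₁.2 hy₂.1 hA hA₁) hAB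
          (mul_le_add_one_sub_mul hy₁.2 hy₂.1 hB₀ hB) hAb haB
    _ = zipS y₁ y₂ (𝟙[A, B] + 𝟙[a, b]) := by
        rw [zipS_add, zipS_indicator_Icc hy₁.1 hy₂.2, zipS_indicator_Icc hy₁.1 hy₂.2]
    _ ≤ zipS y₁ y₂ f := zipS_mono hf

lemma indicator_pair_le_iterate_zipS (hy₁ : y₁ ∈ Ioc 0 1) (hy₂ : y₂ ∈ Ico 0 1)
    {f : ℝ → ℝ} {A B a b : ℝ} (hA : 0 ≤ A) (ha : 0 ≤ a) (hB : B ≤ 1) (hb : b ≤ 1)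
    (hf : 𝟙[A, B] + 𝟙[a, b] ≤ f) (hAB : y₂ + (1 - y₂) * A ≤ y₁ * B)
    (hAb : y₂ + (1 - y₂) * A ≤ y₁ * b) (haB : y₂ + (1 - y₂) * a ≤ y₁ * B) (k : ℕ) :
    𝟙[y₁ ^ k * A, 1 - (1 - y₂) ^ k * (1 - B)] + 𝟙[y₁ ^ k * a, 1 - (1 - y₂) ^ k * (1 - b)] ≤
      (zipS y₁ y₂)^[k] f := by
  induction k with
  | zero => simpa using hf
  | succ k ih =>
    have h₂ : 0 ≤ 1 - y₂ := sub_nonneg.2 hy₂.2.le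
    have hy₁k : y₁ ^ k ≤ 1 := pow_le_one₀ hy₁.1.le hy₁.2
    have hy₂k : (1 - y₂) ^ k ≤ 1 := pow_le_one₀ h₂ (by linarith [hy₂.1])
    -- the endpoints move outwards, so the overlap conditions persist
    have hAk := mul_le_mul_of_nonneg_left (mul_le_of_le_one_left hA hy₁k) h₂
    have hak := mul_le_mul_of_nonneg_left (mul_le_of_le_one_left ha hy₁k) h₂
    have hBk := mul_le_mul_of_nonneg_left (mul_le_of_le_one_left (sub_nonneg.2 hB) hy₂k) hy₁.1.le
    have hbk := mul_le_mul_of_nonneg_left (mul_le_of_le_one_left (sub_nonneg.2 hb) hy₂k) hy₁.1.le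
    rw [Function.iterate_succ_apply']
    refine le_of_eq_of_le ?_ (indicator_pair_le_zipS hy₁ hy₂ (mul_nonneg (pow_nonneg hy₁.1.le k) hA)
      (sub_le_self _ (mul_nonneg (pow_nonneg h₂ k) (sub_nonneg.2 hB))) ih ?_ ?_ ?_)
    · congr 3 <;> ring
    all_goals linarith

lemma exists_two_mul_indicator_Icc_le_iterate_zipS (hy₁ : y₁ ∈ Ioo 0 1) (hy₂ : y₂ ∈ Ioo 0 1)
    {δ : ℝ} (hδ : 0 < δ) (hpq : y₂ + (1 - y₂) * δ ≤ y₁ * (1 - δ))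
    (hAB : y₂ + (1 - y₂) * (y₁ * δ) ≤ y₁ * (y₂ + (1 - y₂) * (1 - δ)))
    (hAb : y₂ + (1 - y₂) * (y₁ * δ) ≤ y₁ * (y₁ * (1 - δ)))
    (haB : y₂ + (1 - y₂) * (y₂ + (1 - y₂) * δ) ≤ y₁ * (y₂ + (1 - y₂) * (1 - δ)))
    {ε : ℝ} (hε : 0 < ε) :
    ∃ n : ℕ, ∀ x, 2 * 𝟙[ε, 1 - ε] x ≤ (zipS y₁ y₂)^[n] 𝟙[δ, 1 - δ] x := by
  obtain ⟨hy₁0, hy₁1⟩ := hy₁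
  obtain ⟨hy₂0, hy₂1⟩ := hy₂
  have hδ1 : δ ≤ 1 := by nlinarith
  have hy₂' : 1 - y₂ < 1 := sub_lt_self 1 hy₂0
  obtain ⟨n, hn₁, hn₂⟩ :=
    (((tendsto_pow_atTop_nhds_zero_of_lt_one hy₁0.le hy₁1).eventually (gt_mem_nhds hε)).and
      ((tendsto_pow_atTop_nhds_zero_of_lt_one (sub_nonneg.2 hy₂1.le) hy₂').eventually
        (gt_mem_nhds hε))).exists
  have hpow {r t : ℝ} (hr : 0 ≤ r) (hrε : r < ε) (ht : t ≤ 1) : r * t ≤ ε :=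
    (mul_le_of_le_one_right hr ht).trans hrε.le
  refine ⟨n + 1, fun x => ?_⟩
  rw [Function.iterate_succ_apply]
  refine (two_mul_indicator_Icc_le_add ?_ ?_ ?_ ?_ x).trans <|
    indicator_pair_le_iterate_zipS ⟨hy₁0, hy₁1.le⟩ ⟨hy₂0.le, hy₂1⟩ ?_ ?_ ?_ ?_
      (indicator_pair_le_zipS_indicator_Icc hy₁0 hy₂1
        (mul_le_add_one_sub_mul hy₁1.le hy₂0.le hδ.le hδ1) hpq) hAB hAb haB n x
  · exact hpow (pow_nonneg hy₁0.le n) hn₁ (by nlinarith)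
  · exact hpow (pow_nonneg hy₁0.le n) hn₁ (by nlinarith)
  · linarith [hpow (pow_nonneg (sub_nonneg.2 hy₂1.le) n) hn₂ (by nlinarith :
      1 - (y₂ + (1 - y₂) * (1 - δ)) ≤ 1)]
  · linarith [hpow (pow_nonneg (sub_nonneg.2 hy₂1.le) n) hn₂ (by nlinarith : 1 - y₁ * (1 - δ) ≤ 1)]
  all_goals nlinarith

end zipS

theorem zipS_doubling (y₁ y₂ : ℝ)
    (hy₁ : y₁ ∈ Ioo (0:ℝ) 1) (hy₂ : y₂ ∈ Ioo (0:ℝ) 1)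
    (hB₁ : y₂ < y₁ ^ 2) (hB₂ : (2 - y₂) * y₂ < y₁) :
    ∀ ε : ℝ, 0 < ε → ∃ δ : ℝ, 0 < δ ∧ ∃ n : ℕ,
      ∀ x : ℝ, 2 * indicator (Icc ε (1 - ε)) (fun _ => (1:ℝ)) x ≤
        (zipS y₁ y₂)^[n] (indicator (Icc δ (1 - δ)) (fun _ => (1:ℝ))) x := by
  intro ε hε
  have hy₂y₁ : y₂ < y₁ := by nlinarith [hy₁.1, hy₁.2]
  have hlt {f g : ℝ → ℝ} (hf : Continuous f) (hg : Continuous g) (h : f 0 < g 0) :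
      ∀ᶠ δ in 𝓝 0, f δ < g δ :=
    hf.continuousAt.eventually_lt hg.continuousAt h
  -- at `δ = 0` these read `y₂ < y₁`, `y₂ < y₁`, `y₂ < y₁ ^ 2` and `(2 - y₂) y₂ < y₁`
  have hsmall : ∀ᶠ δ in 𝓝 (0 : ℝ),
      y₂ + (1 - y₂) * δ < y₁ * (1 - δ) ∧
      y₂ + (1 - y₂) * (y₁ * δ) < y₁ * (y₂ + (1 - y₂) * (1 - δ)) ∧
      y₂ + (1 - y₂) * (y₁ * δ) < y₁ * (y₁ * (1 - δ)) ∧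
      y₂ + (1 - y₂) * (y₂ + (1 - y₂) * δ) < y₁ * (y₂ + (1 - y₂) * (1 - δ)) :=
    (hlt (by fun_prop) (by fun_prop) (by simpa using hy₂y₁)).and <|
      (hlt (by fun_prop) (by fun_prop) (by simpa using hy₂y₁)).and <|
      (hlt (by fun_prop) (by fun_prop) (by simpa [sq] using hB₁)).and
      (hlt (by fun_prop) (by fun_prop) (by nlinarith))
  obtain ⟨δ, ⟨hpq, hAB, hAb, haB⟩, hδ : 0 < δ⟩ :=
    ((eventually_nhdsWithin_of_eventually_nhds hsmall).and self_mem_nhdsWithin).exists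
      (f := 𝓝[>] 0)
  exact ⟨δ, hδ, exists_two_mul_indicator_Icc_le_iterate_zipS hy₁ hy₂ hδ hpq.le hAB.le hAb.le
    haB.le hε⟩
end

section
/- Let (y₁,y₂) ∈ B. For all ε>0 and k>0 there exist η>0 and n∈ℕ such that for every y ∈ [ε,1-ε], the number of words ω ∈ {0,2}ⁿ with [y-η, y+η] ⊆ V_ω([0,1]) is at least k. -/
/-!
Call `y` deep for a word `ω` if `y ∈ V_ω([c, 1 - c])`; then the whole interval of radius
`c · (min y₁ (1 - y₂))ⁿ` around `y` lies in `V_ω([0, 1])`, so it suffices that the number of words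
for which `y` is deep grows unboundedly, uniformly in `y ∈ [c, 1 - c]`. For small `c` the conditions
defining `B` make `[c, 1 - c]` the union of `V₀([c, 1 - c])` and `V₂([c, 1 - c])`, with overlap
`[V₂ c, V₀ (1 - c)]`, and drive every point of `[c, 1 - c]` into the overlap by boundedly many
applications of a single inverse branch, without leaving `[c, 1 - c]`. Both inverse branches map the
overlap into `[c, 1 - c]`, so each such excursion adds a deep word. The substitution `y ↦ 1 - y`,
which swaps `V₀` and `V₂` and exchanges `(y₁, y₂)` with `(1 - y₂, 1 - y₁)`, leaves `B` invariant and
reduces the right half of `[c, 1 - c]` to the left half.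
-/

open Set

/-- The two affine maps V₀(y) = y₁ y (for `false`) and V₂(y) = y₂ + (1-y₂) y (for `true`). -/
noncomputable def zipV (y₁ y₂ : ℝ) : Bool → ℝ → ℝ
  | false => fun y => y₁ * y
  | true => fun y => y₂ + (1 - y₂) * y

/-- For a word ω = i₁…i_n, the composition V_ω = V_{i₁} ∘ … ∘ V_{i_n}. -/
noncomputable def zipVword (y₁ y₂ : ℝ) {n : ℕ} (ω : Fin n → Bool) : ℝ → ℝ :=
  (List.ofFn ω).foldr (fun i g => zipV y₁ y₂ i ∘ g) id

section words

variable {y₁ y₂ : ℝ}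

lemma zipVword_zero (ω : Fin 0 → Bool) : zipVword y₁ y₂ ω = id := rfl

lemma zipVword_cons {n : ℕ} (i : Bool) (ω : Fin n → Bool) (t : ℝ) :
    zipVword y₁ y₂ (Fin.cons i ω) t = zipV y₁ y₂ i (zipVword y₁ y₂ ω t) := by
  simp only [zipVword, List.ofFn_succ, Fin.cons_zero, Fin.cons_succ, List.foldr_cons,
    Function.comp_apply]

lemma zipVword_eq_affine (h₁ : 0 < y₁) (h₂ : y₂ < 1) {n : ℕ} (ω : Fin n → Bool) :
    ∃ r a : ℝ, min y₁ (1 - y₂) ^ n ≤ r ∧ zipVword y₁ y₂ ω = (r * · + a) := by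
  induction n with
  | zero => exact ⟨1, 0, by simp, by ext; simp [zipVword_zero]⟩
  | succ n ih =>
    obtain ⟨r, a, hr, hω⟩ := ih (Fin.tail ω)
    have hρ : 0 ≤ min y₁ (1 - y₂) ^ n := pow_nonneg (le_min h₁.le (by linarith)) n
    rw [← Fin.cons_self_tail ω]
    cases ω 0
    · refine ⟨y₁ * r, y₁ * a, ?_, funext fun t => ?_⟩
      · rw [pow_succ']; exact mul_le_mul (min_le_left _ _) hr hρ h₁.le
      · simp only [zipVword_cons, hω, zipV]; ring
    · refine ⟨(1 - y₂) * r, y₂ + (1 - y₂) * a, ?_, funext fun t => ?_⟩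
      · rw [pow_succ']; exact mul_le_mul (min_le_right _ _) hr hρ (by linarith)
      · simp only [zipVword_cons, hω, zipV]; ring

lemma Icc_subset_zipVword_image (h₁ : 0 < y₁) (h₂ : y₂ < 1) {c y : ℝ} (hc : 0 ≤ c) {n : ℕ}
    {ω : Fin n → Bool} (hy : y ∈ Icc (zipVword y₁ y₂ ω c) (zipVword y₁ y₂ ω (1 - c))) :
    Icc (y - c * min y₁ (1 - y₂) ^ n) (y + c * min y₁ (1 - y₂) ^ n) ⊆
      zipVword y₁ y₂ ω '' Icc 0 1 := by
  obtain ⟨r, a, hr, hω⟩ := zipVword_eq_affine h₁ h₂ ω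
  have hr₀ : 0 < r := (pow_pos (lt_min h₁ (by linarith)) n).trans_le hr
  have hcr := mul_le_mul_of_nonneg_left hr hc
  rw [hω] at hy ⊢
  rw [image_affine_Icc' hr₀]
  exact Icc_subset_Icc (by nlinarith [hy.1]) (by nlinarith [hy.2])

end words

lemma card_add_card_le_card_cons {α : Type*} [Finite α] {a b : α} (hab : a ≠ b) {n : ℕ}
    {P : (Fin (n + 1) → α) → Prop} {Q R : (Fin n → α) → Prop}
    (hQ : ∀ ω, Q ω → P (Fin.cons a ω)) (hR : ∀ ω, R ω → P (Fin.cons b ω)) :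
    Nat.card {ω // Q ω} + Nat.card {ω // R ω} ≤ Nat.card {ω // P ω} := by
  rw [← Nat.card_sum]
  refine Nat.card_le_card_of_injective
    (Sum.elim (fun ω => ⟨Fin.cons a ω.1, hQ _ ω.2⟩) (fun ω => ⟨Fin.cons b ω.1, hR _ ω.2⟩)) ?_
  rintro (⟨ω, _⟩ | ⟨ω, _⟩) (⟨ω', _⟩ | ⟨ω', _⟩) h <;>
    simp only [Sum.elim_inl, Sum.elim_inr, Subtype.mk.injEq, Fin.cons_inj] at h
  · obtain ⟨-, rfl⟩ := h; rfl
  · exact absurd h.1 hab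
  · exact absurd h.1.symm hab
  · obtain ⟨-, rfl⟩ := h; rfl

section deep

variable {y₁ y₂ c : ℝ}

noncomputable def zipVinv (y₁ y₂ : ℝ) : Bool → ℝ → ℝ
  | false => fun y => y / y₁
  | true => fun y => (y - y₂) / (1 - y₂)

lemma zipVinv_mem_Icc_iff (h₁ : 0 < y₁) (h₂ : y₂ < 1) (i : Bool) {a b y : ℝ} :
    zipVinv y₁ y₂ i y ∈ Icc a b ↔ y ∈ Icc (zipV y₁ y₂ i a) (zipV y₁ y₂ i b) := by
  have h₂' : 0 < 1 - y₂ := by linarith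
  cases i <;> simp only [zipVinv, zipV, mem_Icc, le_div_iff₀, div_le_iff₀, h₁, h₂'] <;>
    constructor <;> rintro ⟨_, _⟩ <;> constructor <;> linarith

lemma zipVinv_one_sub (h₁ : y₁ ≠ 0) (h₂ : y₂ ≠ 1) (i : Bool) (y : ℝ) :
    zipVinv (1 - y₂) (1 - y₁) i (1 - y) = 1 - zipVinv y₁ y₂ (!i) y := by
  have h₂' : 1 - y₂ ≠ 0 := sub_ne_zero.2 (Ne.symm h₂)
  cases i <;> simp only [zipVinv, Bool.not_false, Bool.not_true, sub_sub_cancel] <;> field_simp <;>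
    ring

/-- `deepCount y₁ y₂ c n y` counts the words `ω` of length `n` with `y ∈ V_ω([c, 1 - c])`,
computed along the inverse branches. -/
noncomputable def deepCount (y₁ y₂ c : ℝ) : ℕ → ℝ → ℕ
  | 0, y => (Icc c (1 - c)).indicator 1 y
  | n + 1, y =>
    deepCount y₁ y₂ c n (zipVinv y₁ y₂ false y) + deepCount y₁ y₂ c n (zipVinv y₁ y₂ true y)

lemma deepCount_le_card (h₁ : 0 < y₁) (h₂ : y₂ < 1) (n : ℕ) (y : ℝ) :
    deepCount y₁ y₂ c n y ≤
      Nat.card {ω : Fin n → Bool // y ∈ Icc (zipVword y₁ y₂ ω c) (zipVword y₁ y₂ ω (1 - c))} := by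
  induction n generalizing y with
  | zero =>
    by_cases hy : y ∈ Icc c (1 - c)
    · have : Nonempty {ω : Fin 0 → Bool //
          y ∈ Icc (zipVword y₁ y₂ ω c) (zipVword y₁ y₂ ω (1 - c))} := ⟨⟨Fin.elim0, hy⟩⟩
      simp only [deepCount, indicator_of_mem hy, Pi.one_apply]
      exact Nat.card_pos
    · simp [deepCount, hy]
  | succ n ih =>
    refine (add_le_add (ih _) (ih _)).trans (card_add_card_le_card_cons Bool.false_ne_true ?_ ?_)
    all_goals
      intro ω hω
      rwa [zipVword_cons, zipVword_cons, ← zipVinv_mem_Icc_iff h₁ h₂]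

lemma deepCount_one_sub (h₁ : y₁ ≠ 0) (h₂ : y₂ ≠ 1) (n : ℕ) (y : ℝ) :
    deepCount (1 - y₂) (1 - y₁) c n (1 - y) = deepCount y₁ y₂ c n y := by
  induction n generalizing y with
  | zero =>
    have : 1 - y ∈ Icc c (1 - c) ↔ y ∈ Icc c (1 - c) := by
      simp only [mem_Icc]; constructor <;> rintro ⟨_, _⟩ <;> constructor <;> linarith
    simp only [deepCount, indicator_apply, this, Pi.one_apply]
  | succ n ih =>
    simp only [deepCount, zipVinv_one_sub h₁ h₂, ih, Bool.not_false, Bool.not_true, add_comm]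

end deep

/-- `left` says `V₂ c ≤ V₀ (V₀ (1 - c))` and `right` says `V₂ (V₂ c) ≤ V₀ (1 - c)`; the substitution
`y ↦ 1 - y` exchanges them (`Admissible.one_sub`). -/
structure Admissible (y₁ y₂ c : ℝ) : Prop where
  y₁_pos : 0 < y₁
  y₁_lt_one : y₁ < 1
  y₂_pos : 0 < y₂
  y₂_lt_one : y₂ < 1
  c_pos : 0 < c
  left : y₂ + (1 - y₂) * c ≤ y₁ * (y₁ * (1 - c))
  right : 1 - y₁ + y₁ * c ≤ (1 - y₂) * ((1 - y₂) * (1 - c))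

namespace Admissible

variable {y₁ y₂ c : ℝ}

lemma one_sub (h : Admissible y₁ y₂ c) : Admissible (1 - y₂) (1 - y₁) c where
  y₁_pos := sub_pos.2 h.y₂_lt_one
  y₁_lt_one := sub_lt_self 1 h.y₂_pos
  y₂_pos := sub_pos.2 h.y₁_lt_one
  y₂_lt_one := sub_lt_self 1 h.y₁_pos
  c_pos := h.c_pos
  left := by simpa only [sub_sub_cancel] using h.right
  right := by simpa only [sub_sub_cancel] using h.left

lemma c_lt_one (h : Admissible y₁ y₂ c) : c < 1 := by
  by_contra! hc
  have hV₀ : y₁ * (y₁ * (1 - c)) ≤ 0 :=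
    mul_nonpos_of_nonneg_of_nonpos h.y₁_pos.le
      (mul_nonpos_of_nonneg_of_nonpos h.y₁_pos.le (by linarith))
  have hV₂ : 0 < (1 - y₂) * c := mul_pos (sub_pos.2 h.y₂_lt_one) h.c_pos
  linarith [h.left, h.y₂_pos]

lemma overlap (h : Admissible y₁ y₂ c) : y₂ + (1 - y₂) * c ≤ y₁ * (1 - c) := by
  have hV₀ : 0 ≤ y₁ * (1 - c) := mul_nonneg h.y₁_pos.le (sub_nonneg.2 h.c_lt_one.le)
  linarith [h.left, mul_le_of_le_one_left hV₀ h.y₁_lt_one.le]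

lemma zipVinv_mem_Icc_of_mem_overlap (h : Admissible y₁ y₂ c) {y : ℝ}
    (hy : y ∈ Icc (y₂ + (1 - y₂) * c) (y₁ * (1 - c))) (i : Bool) :
    zipVinv y₁ y₂ i y ∈ Icc c (1 - c) := by
  have := h.c_lt_one
  rw [zipVinv_mem_Icc_iff h.y₁_pos h.y₂_lt_one]
  cases i <;> simp only [zipV] <;> constructor <;>
    nlinarith [hy.1, hy.2, h.y₁_pos, h.y₁_lt_one, h.y₂_pos, h.y₂_lt_one, h.c_pos]

lemma exists_zipVinv_mem_Icc (h : Admissible y₁ y₂ c) {y : ℝ} (hy : y ∈ Icc c (1 - c)) :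
    ∃ i, zipVinv y₁ y₂ i y ∈ Icc c (1 - c) := by
  simp only [zipVinv_mem_Icc_iff h.y₁_pos h.y₂_lt_one, zipV, mem_Icc]
  rcases le_or_gt y (y₁ * (1 - c)) with hy' | hy'
  · exact ⟨false, by nlinarith [hy.1, h.y₁_lt_one, h.c_pos], hy'⟩
  · exact ⟨true, by nlinarith [h.overlap], by nlinarith [hy.2, h.y₂_pos, h.c_pos]⟩

lemma deepCount_le_succ (h : Admissible y₁ y₂ c) (n : ℕ) (y : ℝ) :
    deepCount y₁ y₂ c n y ≤ deepCount y₁ y₂ c (n + 1) y := by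
  induction n generalizing y with
  | zero =>
    by_cases hy : y ∈ Icc c (1 - c)
    · obtain ⟨i, hi⟩ := h.exists_zipVinv_mem_Icc hy
      cases i <;> simp [deepCount, hy, hi]
    · simp [deepCount, hy]
  | succ n ih => exact add_le_add (ih _) (ih _)

lemma monotone_deepCount (h : Admissible y₁ y₂ c) (y : ℝ) :
    Monotone (deepCount y₁ y₂ c · y) :=
  monotone_nat_of_le_succ fun n => h.deepCount_le_succ n y

lemma one_le_deepCount (h : Admissible y₁ y₂ c) (n : ℕ) {y : ℝ} (hy : y ∈ Icc c (1 - c)) :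
    1 ≤ deepCount y₁ y₂ c n y := by
  simpa [deepCount, hy] using h.monotone_deepCount y (Nat.zero_le n)

variable {n j : ℕ}

lemma succ_le_deepCount_succ_of_mem_overlap (h : Admissible y₁ y₂ c)
    (hj : ∀ z ∈ Icc c (1 - c), j ≤ deepCount y₁ y₂ c n z) {y : ℝ}
    (hy : y ∈ Icc (y₂ + (1 - y₂) * c) (y₁ * (1 - c))) :
    j + 1 ≤ deepCount y₁ y₂ c (n + 1) y :=
  add_le_add (hj _ (h.zipVinv_mem_Icc_of_mem_overlap hy false))
    (h.one_le_deepCount n (h.zipVinv_mem_Icc_of_mem_overlap hy true))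

/-- Below the overlap, `V₀⁻¹` expands by `1 / y₁` without leaving `[c, 1 - c]`, so `y` reaches the
overlap after at most `s` steps. -/
lemma succ_le_deepCount_of_mul_pow_lt (h : Admissible y₁ y₂ c)
    (hj : ∀ z ∈ Icc c (1 - c), j ≤ deepCount y₁ y₂ c n z) (s : ℕ) {y : ℝ}
    (hy : y ∈ Icc c (y₁ * (1 - c))) (hs : (y₂ + (1 - y₂) * c) * y₁ ^ s < y) :
    j + 1 ≤ deepCount y₁ y₂ c (n + 1 + s) y := by
  induction s generalizing y with
  | zero => exact h.succ_le_deepCount_succ_of_mem_overlap hj ⟨by simpa using hs.le, hy.2⟩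
  | succ s ih =>
    rcases le_or_gt (y₂ + (1 - y₂) * c) y with hy' | hy'
    · exact (h.succ_le_deepCount_succ_of_mem_overlap hj ⟨hy', hy.2⟩).trans
        (h.monotone_deepCount y (by omega))
    · have hV₀ : zipVinv y₁ y₂ false y ∈ Icc c (y₁ * (1 - c)) := by
        rw [zipVinv_mem_Icc_iff h.y₁_pos h.y₂_lt_one]
        simp only [zipV]
        exact ⟨by nlinarith [hy.1, h.y₁_lt_one, h.c_pos], by linarith [h.left]⟩
      have hs' : (y₂ + (1 - y₂) * c) * y₁ ^ s < zipVinv y₁ y₂ false y := by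
        rw [zipVinv, lt_div_iff₀ h.y₁_pos, mul_assoc, ← pow_succ]
        exact hs
      exact (ih hV₀ hs').trans (Nat.le_add_right _ _)

lemma exists_succ_le_deepCount_of_le (h : Admissible y₁ y₂ c)
    (hj : ∀ z ∈ Icc c (1 - c), j ≤ deepCount y₁ y₂ c n z) :
    ∃ t, ∀ y ∈ Icc c (y₁ * (1 - c)), j + 1 ≤ deepCount y₁ y₂ c (n + 1 + t) y := by
  have hm : 0 < y₂ + (1 - y₂) * c := by nlinarith [h.y₂_pos, h.y₂_lt_one, h.c_pos]
  obtain ⟨t, ht⟩ := exists_pow_lt_of_lt_one (div_pos h.c_pos hm) h.y₁_lt_one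
  refine ⟨t, fun y hy => h.succ_le_deepCount_of_mul_pow_lt hj t hy ?_⟩
  calc (y₂ + (1 - y₂) * c) * y₁ ^ t < c := by rwa [lt_div_iff₀' hm] at ht
    _ ≤ y := hy.1

lemma exists_succ_le_deepCount_of_ge (h : Admissible y₁ y₂ c)
    (hj : ∀ z ∈ Icc c (1 - c), j ≤ deepCount y₁ y₂ c n z) :
    ∃ t, ∀ y ∈ Icc (y₂ + (1 - y₂) * c) (1 - c), j + 1 ≤ deepCount y₁ y₂ c (n + 1 + t) y := by
  have hdual (m : ℕ) (z : ℝ) :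
      deepCount (1 - y₂) (1 - y₁) c m z = deepCount y₁ y₂ c m (1 - z) := by
    rw [← deepCount_one_sub h.y₁_pos.ne' h.y₂_lt_one.ne, sub_sub_cancel]
  obtain ⟨t, ht⟩ := h.one_sub.exists_succ_le_deepCount_of_le fun z hz =>
    (hdual n z).symm ▸ hj _ ⟨by linarith [hz.2], by linarith [hz.1]⟩
  refine ⟨t, fun y hy => ?_⟩
  simpa [hdual] using ht (1 - y) ⟨by linarith [hy.2], by nlinarith [hy.1]⟩

lemma exists_le_deepCount (h : Admissible y₁ y₂ c) (j : ℕ) :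
    ∃ n, ∀ y ∈ Icc c (1 - c), j ≤ deepCount y₁ y₂ c n y := by
  induction j with
  | zero => exact ⟨0, fun _ _ => Nat.zero_le _⟩
  | succ j ih =>
    obtain ⟨n, hn⟩ := ih
    obtain ⟨t₀, ht₀⟩ := h.exists_succ_le_deepCount_of_le hn
    obtain ⟨t₁, ht₁⟩ := h.exists_succ_le_deepCount_of_ge hn
    refine ⟨n + 1 + max t₀ t₁, fun y hy => ?_⟩
    rcases le_or_gt y (y₁ * (1 - c)) with hy' | hy'
    · exact (ht₀ y ⟨hy.1, hy'⟩).trans (h.monotone_deepCount y (by omega))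
    · exact (ht₁ y ⟨h.overlap.trans hy'.le, hy.2⟩).trans (h.monotone_deepCount y (by omega))

end Admissible

open Filter Topology in
lemma exists_admissible {y₁ y₂ : ℝ} (hy₁ : y₁ ∈ Ioo (0:ℝ) 1) (hy₂ : y₂ ∈ Ioo (0:ℝ) 1)
    (hB₁ : y₂ < y₁ ^ 2) (hB₂ : (2 - y₂) * y₂ < y₁) {ε : ℝ} (hε : 0 < ε) :
    ∃ c ∈ Ioc 0 ε, Admissible y₁ y₂ c := by
  have hsmall : ∀ᶠ c in 𝓝 (0:ℝ), c < ε ∧ y₂ + (1 - y₂) * c < y₁ * (y₁ * (1 - c)) ∧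
      1 - y₁ + y₁ * c < (1 - y₂) * ((1 - y₂) * (1 - c)) := by
    refine (gt_mem_nhds hε).and ((ContinuousAt.eventually_lt ?_ ?_ ?_).and
      (ContinuousAt.eventually_lt ?_ ?_ ?_)) <;> first | fun_prop | nlinarith
  obtain ⟨c, ⟨hcε, hl, hr⟩, hc⟩ := ((hsmall.filter_mono nhdsWithin_le_nhds).and
    self_mem_nhdsWithin).exists (f := 𝓝[>] 0)
  exact ⟨c, ⟨hc, hcε.le⟩, hy₁.1, hy₁.2, hy₂.1, hy₂.2, hc, hl.le, hr.le⟩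

theorem many_covering_words (y₁ y₂ : ℝ)
    (hy₁ : y₁ ∈ Ioo (0:ℝ) 1) (hy₂ : y₂ ∈ Ioo (0:ℝ) 1)
    (hB₁ : y₂ < y₁ ^ 2) (hB₂ : (2 - y₂) * y₂ < y₁) :
    ∀ ε : ℝ, 0 < ε → ∀ k : ℕ, ∃ η : ℝ, 0 < η ∧ ∃ n : ℕ,
      ∀ y ∈ Icc ε (1 - ε),
        k ≤ Nat.card {ω : Fin n → Bool //
          Icc (y - η) (y + η) ⊆ zipVword y₁ y₂ ω '' Icc 0 1} := by
  intro ε hε k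
  obtain ⟨c, ⟨hc, hcε⟩, hadm⟩ := exists_admissible hy₁ hy₂ hB₁ hB₂ hε
  obtain ⟨n, hn⟩ := hadm.exists_le_deepCount k
  refine ⟨c * min y₁ (1 - y₂) ^ n, mul_pos hc (pow_pos (lt_min hy₁.1 (by linarith [hy₂.2])) n),
    n, fun y hy => ?_⟩
  calc k ≤ deepCount y₁ y₂ c n y := hn y (Icc_subset_Icc hcε (by linarith) hy)
    _ ≤ _ := deepCount_le_card hy₁.1 hy₂.2 n y
    _ ≤ _ := Nat.card_le_card_of_injective _ (Subtype.impEmbedding _ _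
        fun ω => Icc_subset_zipVword_image hy₁.1 hy₂.2 hc.le).injective
end

section
/- Let T = Z_p be a zipper map with λ_min > 1 and symmetric parameter, i.e. x₁+x₂ = 1 and y₁+y₂ = 1. Then T admits horseshoes of all orders: for every k ∈ ℕ there exist compact subintervals I₁,…,I_k of [0,1] with pairwise disjoint interiors such that T(I_i) ⊇ I_j for all i,j ∈ {1,…,k}. -/
/-! With `a = x₂ - x₁` and `b = y₁ - y₂`, symmetry makes the middle branch of the fixed-point
equation, in coordinates centred at `(1/2, 1/2)`, read `g (a s) = -b g s`. Hence along
`q m = 1/2 - a^m/2 → 1/2` the values `Z (q m) = 1/2 - (-b)^m/2` alternate around `1/2` at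
distance `b^m/2`, and `λ_min > 1` gives `b > a`: the heights shrink more slowly than the points
approach `1/2`. For `n` large the `k` intervals `[q (n + 2i), q (n + 2i + 1)]` therefore all lie in
an interval `K` around `1/2` of radius below every `b^(n + 2i + 1)/2`, and by the intermediate
value theorem the image of each of them contains `K`. -/

open Set

def IsHorseshoe (T : ℝ → ℝ) {k : ℕ} (I : Fin k → Set ℝ) : Prop :=
  (∀ i, ∃ a b : ℝ, a < b ∧ 0 ≤ a ∧ b ≤ 1 ∧ I i = Icc a b) ∧
  (∀ i j, i ≠ j → interior (I i) ∩ interior (I j) = ∅) ∧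
  (∀ i j, I j ⊆ T '' I i)

lemma interior_Icc_inter_eq_empty_of_strictMono {p : ℕ → ℝ} (hp : StrictMono p) {i j : ℕ}
    (hij : i < j) :
    interior (Icc (p (2 * i)) (p (2 * i + 1))) ∩
      interior (Icc (p (2 * j)) (p (2 * j + 1))) = ∅ := by
  have hsep : p (2 * i + 1) ≤ p (2 * j) := hp.monotone (by omega)
  rw [interior_Icc, interior_Icc, Ioo_inter_Ioo]
  exact Ioo_eq_empty (not_lt.2 ((min_le_left _ _).trans (hsep.trans (le_max_right _ _))))

theorem isHorseshoe_of_strictMono {T : ℝ → ℝ} (hT : ContinuousOn T (Icc 0 1)) {p : ℕ → ℝ}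
    (hp : StrictMono p) (hp0 : 0 ≤ p 0) (hp1 : ∀ j, p j ≤ 1) {k : ℕ} {K : Set ℝ}
    (hIK : ∀ j : Fin k, Icc (p (2 * j)) (p (2 * j + 1)) ⊆ K)
    (hKT : ∀ i : Fin k, K ⊆ uIcc (T (p (2 * i))) (T (p (2 * i + 1)))) :
    IsHorseshoe T fun i : Fin k => Icc (p (2 * i)) (p (2 * i + 1)) := by
  refine ⟨fun i => ⟨_, _, hp (by omega), hp0.trans (hp.monotone (Nat.zero_le _)), hp1 _, rfl⟩,
    fun i j hij => ?_, fun i j => ?_⟩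
  · rcases lt_or_gt_of_ne (Fin.val_ne_of_ne hij) with h | h
    · exact interior_Icc_inter_eq_empty_of_strictMono hp h
    · rw [inter_comm]; exact interior_Icc_inter_eq_empty_of_strictMono hp h
  · have hle : p (2 * i) ≤ p (2 * i + 1) := (hp (by omega)).le
    have hsub : uIcc (p (2 * i)) (p (2 * i + 1)) ⊆ Icc 0 1 := by
      rw [uIcc_of_le hle]; exact Icc_subset_Icc (hp0.trans (hp.monotone (Nat.zero_le _))) (hp1 _)
    calc Icc (p (2 * j)) (p (2 * j + 1)) ⊆ K := hIK j
      _ ⊆ _ := hKT i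
      _ ⊆ T '' uIcc (p (2 * i)) (p (2 * i + 1)) := intermediate_value_uIcc (hT.mono hsub)
      _ = T '' Icc (p (2 * i)) (p (2 * i + 1)) := by rw [uIcc_of_le hle]

lemma zipperPhi_fixedPoint_middle {x₁ y₁ x₂ y₂ : ℝ} {Z : ℝ → ℝ} (hx₁ : 0 < x₁) (hx : x₁ < x₂)
    (hx₂ : x₂ ≤ 1) (hZ0 : Z 0 = 0) (hZ1 : Z 1 = 1)
    (hfix : EqOn (zipperPhi x₁ y₁ x₂ y₂ Z) Z (Icc 0 1)) {t : ℝ} (ht : t ∈ Icc 0 1) :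
    Z (x₁ + (x₂ - x₁) * t) = y₁ - (y₁ - y₂) * Z t := by
  have hmem : x₁ + (x₂ - x₁) * t ∈ Icc 0 1 := ⟨by nlinarith [ht.1], by nlinarith [ht.2]⟩
  rw [← hfix hmem, zipperPhi]
  rcases ht.1.eq_or_lt with rfl | ht0
  · simp [hx₁.ne', hZ0, hZ1]
  · rw [if_neg (by nlinarith), if_pos (by nlinarith [ht.2]), add_sub_cancel_left,
      mul_div_cancel_left₀ t (sub_ne_zero.2 hx.ne')]

lemma map_pow_mul_of_map_mul {g : ℝ → ℝ} {S : Set ℝ} {a c : ℝ} (hS : MapsTo (a * ·) S S)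
    (hg : ∀ s ∈ S, g (a * s) = c * g s) {s : ℝ} (hs : s ∈ S) (m : ℕ) :
    g (a ^ m * s) = c ^ m * g s := by
  have hmem : ∀ m : ℕ, a ^ m * s ∈ S := by
    intro m
    induction m with
    | zero => simpa
    | succ m ih => simpa [pow_succ', mul_assoc] using hS ih
  induction m with
  | zero => simp
  | succ m ih => rw [pow_succ', mul_assoc, hg _ (hmem m), ih, pow_succ', mul_assoc]

lemma zipper_symmetric_apply_half_sub_pow {x₁ y₁ x₂ y₂ : ℝ} {Z : ℝ → ℝ} (hx₁ : 0 < x₁)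
    (hx : x₁ < x₂) (hsymx : x₁ + x₂ = 1) (hsymy : y₁ + y₂ = 1) (hZ0 : Z 0 = 0) (hZ1 : Z 1 = 1)
    (hfix : EqOn (zipperPhi x₁ y₁ x₂ y₂ Z) Z (Icc 0 1)) (m : ℕ) :
    Z (1 / 2 - (x₂ - x₁) ^ m / 2) = 1 / 2 - (-(y₁ - y₂)) ^ m / 2 := by
  set a := x₂ - x₁
  have ha0 : 0 < a := sub_pos.2 hx
  have ha1 : a < 1 := by linarith
  let g : ℝ → ℝ := fun s => Z (1 / 2 + s) - 1 / 2
  have hS : MapsTo (a * ·) (Icc (-1 / 2) (1 / 2)) (Icc (-1 / 2) (1 / 2)) :=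
    fun s hs => ⟨by nlinarith [hs.1], by nlinarith [hs.2]⟩
  have hg : ∀ s ∈ Icc (-1 / 2 : ℝ) (1 / 2), g (a * s) = -(y₁ - y₂) * g s := by
    intro s hs
    have hmid := zipperPhi_fixedPoint_middle hx₁ hx (by linarith) hZ0 hZ1 hfix
      (t := 1 / 2 + s) ⟨by linarith [hs.1], by linarith [hs.2]⟩
    rw [show x₁ + a * (1 / 2 + s) = 1 / 2 + a * s by simp only [a]; linarith] at hmid
    simp only [g, hmid]
    linarith
  have := map_pow_mul_of_map_mul hS hg (s := -1 / 2) ⟨by norm_num, by norm_num⟩ m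
  have hZ0' : Z (1 / 2 + -1 / 2) = 0 := by norm_num [hZ0]
  simp only [g, hZ0'] at this
  rw [show 1 / 2 - a ^ m / 2 = 1 / 2 + a ^ m * (-1 / 2) by ring]
  linarith

lemma Icc_subset_uIcc_sub_add_mul {b : ℝ} (hb0 : 0 ≤ b) (hb1 : b ≤ 1) (c w : ℝ) :
    Icc (c - b * |w|) (c + b * |w|) ⊆ uIcc (c - w) (c + b * w) := by
  rcases le_total 0 w with hw | hw
  · rw [abs_of_nonneg hw, uIcc_of_le (by nlinarith)]
    exact Icc_subset_Icc (by nlinarith) le_rfl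
  · rw [abs_of_nonpos hw, uIcc_of_ge (by nlinarith)]
    exact Icc_subset_Icc (by linarith) (by nlinarith)

lemma exists_pow_lt_pow_add {a b : ℝ} (ha : 0 ≤ a) (hab : a < b) (k : ℕ) :
    ∃ n : ℕ, a ^ n < b ^ (n + k) := by
  have hb : 0 < b := ha.trans_lt hab
  obtain ⟨n, hn⟩ := exists_pow_lt_of_lt_one (pow_pos hb k) ((div_lt_one hb).2 hab)
  refine ⟨n, ?_⟩
  rwa [div_pow, div_lt_iff₀ (pow_pos hb n), ← pow_add, add_comm] at hn

theorem exists_isHorseshoe_of_apply_half_sub_pow {T : ℝ → ℝ} (hT : ContinuousOn T (Icc 0 1))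
    {a b : ℝ} (ha0 : 0 < a) (ha1 : a < 1) (hab : a < b) (hb1 : b ≤ 1)
    (hTq : ∀ m : ℕ, T (1 / 2 - a ^ m / 2) = 1 / 2 - (-b) ^ m / 2) (k : ℕ) :
    ∃ I : Fin k → Set ℝ, IsHorseshoe T I := by
  have hb0 : 0 < b := ha0.trans hab
  obtain ⟨n, hn⟩ := exists_pow_lt_pow_add ha0.le hab (2 * k)
  have hp : StrictMono fun j => 1 / 2 - a ^ (n + j) / 2 := fun i j hij => by
    have := pow_right_strictAnti₀ ha0 ha1 (Nat.add_lt_add_left hij n)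
    dsimp only
    linarith
  refine ⟨_, isHorseshoe_of_strictMono hT hp ?_ ?_
    (K := Icc (1 / 2 - b ^ (n + 2 * k) / 2) (1 / 2 + b ^ (n + 2 * k) / 2)) ?_ ?_⟩
  · linarith [pow_le_one₀ ha0.le ha1.le (n := n + 0)]
  · intro j
    linarith [pow_nonneg ha0.le (n + j)]
  · intro j
    have : a ^ (n + 2 * j) ≤ a ^ n := pow_le_pow_of_le_one ha0.le ha1.le (by omega)
    exact Icc_subset_Icc (by linarith)
      (by linarith [pow_nonneg ha0.le (n + (2 * j + 1)), pow_nonneg hb0.le (n + 2 * k)])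
  · intro i
    set m := n + 2 * (i : ℕ)
    have hcov := Icc_subset_uIcc_sub_add_mul hb0.le hb1 (1 / 2) ((-b) ^ m / 2)
    rw [show b * |(-b) ^ m / 2| = b ^ (m + 1) / 2 by
        rw [abs_div, abs_pow, abs_neg, abs_of_pos hb0, abs_two, pow_succ']; ring,
      show 1 / 2 + b * ((-b) ^ m / 2) = 1 / 2 - (-b) ^ (m + 1) / 2 by ring] at hcov
    have hβ : b ^ (n + 2 * k) ≤ b ^ (m + 1) := pow_le_pow_of_le_one hb0.le hb1 (by omega)
    rw [hTq, hTq, show n + (2 * (i : ℕ) + 1) = m + 1 by omega]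
    exact (Icc_subset_Icc (by linarith) (by linarith)).trans hcov

theorem zipper_symmetric_horseshoes_general (x₁ y₁ x₂ y₂ : ℝ)
    (hx₁ : x₁ ∈ Ioo (0:ℝ) 1) (hy₁ : y₁ ∈ Ioo (0:ℝ) 1)
    (hx : x₁ < x₂)
    (hlam : 1 < min (y₁ / x₁) (min ((y₁ - y₂) / (x₂ - x₁)) ((1 - y₂) / (1 - x₂))))
    (hsymx : x₁ + x₂ = 1) (hsymy : y₁ + y₂ = 1)
    (Z : ℝ → ℝ) (hZ : IsC00 Z) (hfix : EqOn (zipperPhi x₁ y₁ x₂ y₂ Z) Z (Icc 0 1)) :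
    ∀ k : ℕ, ∃ I : Fin k → Set ℝ,
      (∀ i, ∃ a b : ℝ, a < b ∧ 0 ≤ a ∧ b ≤ 1 ∧ I i = Icc a b) ∧
      (∀ i j, i ≠ j → interior (I i) ∩ interior (I j) = ∅) ∧
      (∀ i j, I j ⊆ Z '' I i) := by
  obtain ⟨hZc, -, hZ0, hZ1⟩ := hZ
  have hab : x₂ - x₁ < y₁ - y₂ := (one_lt_div (sub_pos.2 hx)).1
    (hlam.trans_le ((min_le_right _ _).trans (min_le_left _ _)))
  exact exists_isHorseshoe_of_apply_half_sub_pow hZc (sub_pos.2 hx) (by linarith [hx₁.1]) hab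
    (by linarith [hy₁.2]) (zipper_symmetric_apply_half_sub_pow hx₁.1 hx hsymx hsymy hZ0 hZ1 hfix)

/-- A hypersensitive zipper map with symmetric parameter admits horseshoes of all orders. -/
theorem zipper_symmetric_horseshoes (x₁ y₁ x₂ y₂ : ℝ)
    (hx₁ : x₁ ∈ Ioo (0:ℝ) 1) (hy₁ : y₁ ∈ Ioo (0:ℝ) 1)
    (hx₂ : x₂ ∈ Ioo (0:ℝ) 1) (hy₂ : y₂ ∈ Ioo (0:ℝ) 1)
    (hx : x₁ < x₂) (hy : y₂ < y₁)
    (hlam : 1 < min (y₁ / x₁) (min ((y₁ - y₂) / (x₂ - x₁)) ((1 - y₂) / (1 - x₂))))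
    (hsymx : x₁ + x₂ = 1) (hsymy : y₁ + y₂ = 1)
    (Z : ℝ → ℝ) (hZ : IsC00 Z) (hfix : EqOn (zipperPhi x₁ y₁ x₂ y₂ Z) Z (Icc 0 1)) :
    ∀ k : ℕ, ∃ I : Fin k → Set ℝ,
      (∀ i, ∃ a b : ℝ, a < b ∧ 0 ≤ a ∧ b ≤ 1 ∧ I i = Icc a b) ∧
      (∀ i j, i ≠ j → interior (I i) ∩ interior (I j) = ∅) ∧
      (∀ i j, I j ⊆ Z '' I i) :=
  zipper_symmetric_horseshoes_general x₁ y₁ x₂ y₂ hx₁ hy₁ hx hlam hsymx hsymy Z hZ hfix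
end

section
/- Let T:[0,1]→[0,1] be continuous and admit, for every k, a horseshoe of order k consisting of pairwise disjoint compact intervals. Then for every finite set Ω and every map S:Ω→Ω, S is embedded in T: there exists an injective map π:Ω→[0,1] with π∘S = T∘π. -/
open Set


lemma horse_cover_aux (T : ℝ → ℝ) {s t c d : ℝ} (hst : s ≤ t)
    (hT : ContinuousOn T (Icc s t)) (hs : T s = c) (ht : T t = d) (hcd : c ≤ d) :
    ∃ u v, s ≤ u ∧ u ≤ v ∧ v ≤ t ∧ T '' Icc u v = Icc c d := by
  set A : Set ℝ := Icc s t ∩ T ⁻¹' {c} with hAdef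
  have hAclosed : IsClosed A := hT.preimage_isClosed_of_isClosed isClosed_Icc isClosed_singleton
  have hAcomp : IsCompact A := isCompact_Icc.of_isClosed_subset hAclosed inter_subset_left
  have hAne : A.Nonempty := ⟨s, ⟨le_refl s, hst⟩, hs⟩
  have huA : sSup A ∈ A := hAcomp.sSup_mem hAne
  set u := sSup A with hu
  have huIcc : u ∈ Icc s t := huA.1
  have huc : T u = c := huA.2
  set B : Set ℝ := Icc u t ∩ T ⁻¹' {d} with hBdef
  have hBclosed : IsClosed B :=
    (hT.mono (Icc_subset_Icc huIcc.1 le_rfl)).preimage_isClosed_of_isClosed isClosed_Icc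
      isClosed_singleton
  have hBcomp : IsCompact B := isCompact_Icc.of_isClosed_subset hBclosed inter_subset_left
  have hBne : B.Nonempty := ⟨t, ⟨huIcc.2, le_refl t⟩, ht⟩
  have hvB : sInf B ∈ B := hBcomp.sInf_mem hBne
  set v := sInf B with hv
  have hvIcc : v ∈ Icc u t := hvB.1
  have hvd : T v = d := hvB.2
  have huv : u ≤ v := hvIcc.1
  refine ⟨u, v, huIcc.1, huv, hvIcc.2, ?_⟩
  apply Subset.antisymm
  · rintro _ ⟨x, hx, rfl⟩
    constructor
    · by_contra hlt
      push_neg at hlt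
      have hiv : Icc (T x) (T v) ⊆ T '' Icc x v :=
        intermediate_value_Icc hx.2 (hT.mono (Icc_subset_Icc (huIcc.1.trans hx.1) hvIcc.2))
      obtain ⟨y, hy, hyc⟩ := hiv ⟨hlt.le, hvd ▸ hcd⟩
      have hyA : y ∈ A := ⟨⟨(huIcc.1.trans hx.1).trans hy.1, hy.2.trans hvIcc.2⟩, hyc⟩
      have hyu : y ≤ u := le_csSup hAcomp.bddAbove hyA
      have : x = y := le_antisymm hy.1 (hyu.trans hx.1)
      rw [← this] at hyc
      exact absurd hyc (ne_of_lt hlt)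
    · by_contra hlt
      push_neg at hlt
      have hiv : Icc (T u) (T x) ⊆ T '' Icc u x :=
        intermediate_value_Icc hx.1 (hT.mono (Icc_subset_Icc huIcc.1 (hx.2.trans hvIcc.2)))
      obtain ⟨y, hy, hyd⟩ := hiv ⟨huc ▸ hcd, hlt.le⟩
      have hyB : y ∈ B := ⟨⟨hy.1, (hy.2.trans hx.2).trans hvIcc.2⟩, hyd⟩
      have hvy : v ≤ y := csInf_le hBcomp.bddBelow hyB
      have : y = x := le_antisymm hy.2 (hx.2.trans hvy)
      rw [this] at hyd
      exact absurd hyd (ne_of_gt hlt)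
  · have : Icc c d = Icc (T u) (T v) := by rw [huc, hvd]
    rw [this]
    exact intermediate_value_Icc huv (hT.mono (Icc_subset_Icc huIcc.1 hvIcc.2))

lemma horse_cover (T : ℝ → ℝ) {a b c d : ℝ} (hT : ContinuousOn T (Icc a b))
    (hcd : c ≤ d) (him : Icc c d ⊆ T '' Icc a b) :
    ∃ u v, a ≤ u ∧ u ≤ v ∧ v ≤ b ∧ T '' Icc u v = Icc c d := by
  obtain ⟨s, hsm, hsc⟩ := him (left_mem_Icc.mpr hcd)
  obtain ⟨t, htm, htd⟩ := him (right_mem_Icc.mpr hcd)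
  rcases le_total s t with h | h
  · obtain ⟨u, v, h1, h2, h3, h4⟩ :=
      horse_cover_aux T h (hT.mono (Icc_subset_Icc hsm.1 htm.2)) hsc htd hcd
    exact ⟨u, v, hsm.1.trans h1, h2, h3.trans htm.2, h4⟩
  · -- t ≤ s : reflect
    have hneg : ContinuousOn (fun x => T (-x)) (Icc (-s) (-t)) := by
      have : MapsTo (fun x : ℝ => -x) (Icc (-s) (-t)) (Icc t s) := by
        intro x hx
        have h1 := hx.1; have h2 := hx.2
        exact ⟨by dsimp; linarith, by dsimp; linarith⟩
      exact hT.comp (continuous_neg.continuousOn) fun x hx =>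
        (Icc_subset_Icc htm.1 hsm.2) (this hx)
    have h' : -s ≤ -t := neg_le_neg h
    obtain ⟨u, v, h1, h2, h3, h4⟩ :=
      horse_cover_aux (fun x => T (-x)) h' hneg (by simp [hsc]) (by simp [htd]) hcd
    refine ⟨-v, -u, ?_, neg_le_neg h2, ?_, ?_⟩
    · linarith [htm.1, h3]
    · linarith [hsm.2, h1]
    · rw [← h4]
      ext y
      simp only [Set.mem_image]
      constructor
      · rintro ⟨x, hx, rfl⟩
        exact ⟨-x, ⟨by linarith [hx.2], by linarith [hx.1]⟩, by simp⟩
      · rintro ⟨x, hx, rfl⟩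
        exact ⟨-x, ⟨by linarith [hx.2], by linarith [hx.1]⟩, rfl⟩

lemma horse_iter_maps (T : ℝ → ℝ) (hTm : MapsTo T (Icc (0:ℝ) 1) (Icc 0 1)) :
    ∀ n, MapsTo (T^[n]) (Icc (0:ℝ) 1) (Icc 0 1) := by
  intro n
  induction n with
  | zero => simpa using mapsTo_id _
  | succ n ih =>
    rw [Function.iterate_succ']
    exact hTm.comp ih

lemma horse_iter_cont (T : ℝ → ℝ) (hTc : ContinuousOn T (Icc 0 1))
    (hTm : MapsTo T (Icc (0:ℝ) 1) (Icc 0 1)) :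
    ∀ n, ContinuousOn (T^[n]) (Icc (0:ℝ) 1) := by
  intro n
  induction n with
  | zero => simpa using continuousOn_id
  | succ n ih =>
    rw [Function.iterate_succ']
    exact hTc.comp ih (horse_iter_maps T hTm n)

lemma horse_chain (T : ℝ → ℝ) (hTc : ContinuousOn T (Icc 0 1)) :
    ∀ (p : ℕ) (a b : ℕ → ℝ), (∀ j, a j ≤ b j) → (∀ j, 0 ≤ a j) → (∀ j, b j ≤ 1) →
    (∀ j, Icc (a (j+1)) (b (j+1)) ⊆ T '' Icc (a j) (b j)) →
    ∃ c d : ℕ → ℝ, (∀ j, a j ≤ c j ∧ c j ≤ d j ∧ d j ≤ b j) ∧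
      c p = a p ∧ d p = b p ∧
      ∀ j, j < p → T '' Icc (c j) (d j) = Icc (c (j+1)) (d (j+1)) := by
  intro p
  induction p with
  | zero =>
    intro a b h1 _ _ _
    exact ⟨a, b, fun j => ⟨le_refl _, h1 j, le_refl _⟩, rfl, rfl,
      fun j hj => absurd hj (Nat.not_lt_zero j)⟩
  | succ p ih =>
    intro a b h1 h0 hb hcov
    obtain ⟨c', d', hbd, hcp, hdp, heq⟩ := ih (fun j => a (j+1)) (fun j => b (j+1))
      (fun j => h1 _) (fun j => h0 _) (fun j => hb _) (fun j => hcov _)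
    have hsub : Icc (c' 0) (d' 0) ⊆ T '' Icc (a 0) (b 0) :=
      (Icc_subset_Icc (hbd 0).1 (hbd 0).2.2).trans (hcov 0)
    obtain ⟨u, v, hu, huv, hv, him⟩ :=
      horse_cover T (hTc.mono (Icc_subset_Icc (h0 0) (hb 0))) (hbd 0).2.1 hsub
    refine ⟨fun j => if j = 0 then u else c' (j-1), fun j => if j = 0 then v else d' (j-1),
      ?_, ?_, ?_, ?_⟩
    · intro j
      rcases j with _ | m
      · simpa using ⟨hu, huv, hv⟩
      · simpa using hbd m
    · simp [hcp]
    · simp [hdp]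
    · intro j hj
      rcases j with _ | m
      · simpa using him
      · have hm : m < p := by omega
        simpa using heq m hm

lemma horse_per_pt (T : ℝ → ℝ) (hTc : ContinuousOn T (Icc 0 1))
    (hTm : MapsTo T (Icc (0:ℝ) 1) (Icc 0 1))
    (p : ℕ) (a b : ℕ → ℝ) (h1 : ∀ j, a j ≤ b j) (h0 : ∀ j, 0 ≤ a j) (hb : ∀ j, b j ≤ 1)
    (hcov : ∀ j, Icc (a (j+1)) (b (j+1)) ⊆ T '' Icc (a j) (b j))
    (hpa : a p = a 0) (hpb : b p = b 0) :
    ∃ x, T^[p] x = x ∧ ∀ j, j ≤ p → T^[j] x ∈ Icc (a j) (b j) := by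
  obtain ⟨c, d, hbd, hcp, hdp, heq⟩ := horse_chain T hTc p a b h1 h0 hb hcov
  have hQ01 : Icc (c 0) (d 0) ⊆ Icc (0:ℝ) 1 :=
    Icc_subset_Icc ((h0 0).trans (hbd 0).1) ((hbd 0).2.2.trans (hb 0))
  have hiter : ∀ j, j ≤ p → T^[j] '' Icc (c 0) (d 0) = Icc (c j) (d j) := by
    intro j
    induction j with
    | zero => intro _; simp
    | succ j ihj =>
      intro hj
      have hj' : j ≤ p := le_of_lt hj
      rw [Function.iterate_succ', Set.image_comp, ihj hj', heq j hj]
  have hp : T^[p] '' Icc (c 0) (d 0) = Icc (a 0) (b 0) := by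
    rw [hiter p le_rfl, hcp, hdp, hpa, hpb]
  have ha0 : a 0 ∈ T^[p] '' Icc (c 0) (d 0) := by rw [hp]; exact ⟨le_rfl, h1 0⟩
  have hb0 : b 0 ∈ T^[p] '' Icc (c 0) (d 0) := by rw [hp]; exact ⟨h1 0, le_rfl⟩
  obtain ⟨s, hsm, hs⟩ := ha0
  obtain ⟨t, htm, ht⟩ := hb0
  -- fixed point via IVT for g x = T^[p] x - x on uIcc s t
  have hsub : uIcc s t ⊆ Icc (c 0) (d 0) := by
    rw [uIcc_eq_union]
    exact union_subset (Icc_subset_Icc hsm.1 htm.2) (Icc_subset_Icc htm.1 hsm.2)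
  have hg : ContinuousOn (fun x => T^[p] x - x) (uIcc s t) :=
    ((horse_iter_cont T hTc hTm p).mono (hsub.trans hQ01)).sub continuousOn_id
  have hivt := intermediate_value_uIcc hg
  have h0mem : (0:ℝ) ∈ uIcc (T^[p] s - s) (T^[p] t - t) := by
    apply Icc_subset_uIcc
    constructor
    · rw [hs]; linarith [hsm.1, (hbd 0).1]
    · rw [ht]; linarith [htm.2, (hbd 0).2.2]
  obtain ⟨x, hxm, hx⟩ := hivt h0mem
  have hfix : T^[p] x = x := by linarith [sub_eq_zero.mp hx]
  have hxQ : x ∈ Icc (c 0) (d 0) := hsub hxm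
  refine ⟨x, hfix, ?_⟩
  intro j hj
  have : T^[j] x ∈ T^[j] '' Icc (c 0) (d 0) := ⟨x, hxQ, rfl⟩
  rw [hiter j hj] at this
  exact Icc_subset_Icc (hbd j).1 (hbd j).2.2 this

/-- A map with horseshoes of all orders (with pairwise disjoint compact intervals)
embeds every finite dynamical system. -/
theorem embed_finite_systems (T : ℝ → ℝ)
    (hTc : ContinuousOn T (Icc 0 1)) (hTm : MapsTo T (Icc 0 1) (Icc 0 1))
    (hhorse : ∀ k : ℕ, ∃ I : Fin k → Set ℝ,
      (∀ i, ∃ a b : ℝ, a < b ∧ 0 ≤ a ∧ b ≤ 1 ∧ I i = Icc a b) ∧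
      (Pairwise (Function.onFun Disjoint I)) ∧
      (∀ i j, I j ⊆ T '' I i)) :
    ∀ (Ω : Type) [Fintype Ω] (S : Ω → Ω),
      ∃ π : Ω → ℝ, Function.Injective π ∧ (∀ ω, π ω ∈ Icc (0:ℝ) 1) ∧
        ∀ ω, π (S ω) = T (π ω) := by
  intro Ω _ S
  classical
  set e := Fintype.equivFin Ω with hedef
  obtain ⟨I, hI, hdisj, hcovI⟩ := hhorse (Fintype.card Ω)
  choose A B hAB h0 h1 hIeq using hI
  have hab : ∀ n, A n ≤ B n := fun n => (hAB n).le
  have hcov' : ∀ n m : Fin (Fintype.card Ω), Icc (A m) (B m) ⊆ T '' Icc (A n) (B n) := by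
    intro n m; rw [← hIeq, ← hIeq]; exact hcovI n m
  -- the set of periodic points
  set P : Ω → Prop := fun ω => ∃ m, 0 < m ∧ S^[m] ω = ω with hPdef
  have hPS : ∀ ω, P ω → P (S ω) := by
    intro ω h
    obtain ⟨m, hm, hfix⟩ : ∃ m, 0 < m ∧ S^[m] ω = ω := h
    exact ⟨m, hm, by
      rw [← Function.iterate_succ_apply, Function.iterate_succ_apply', hfix]⟩
  have hPiter : ∀ j ω, P ω → P (S^[j] ω) := by
    intro j
    induction j with
    | zero => intro ω h; simpa using h
    | succ j ih => intro ω h; rw [Function.iterate_succ_apply]; exact ih _ (hPS ω h)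
  have hreach : ∀ ω, ∃ n, P (S^[n] ω) := by
    intro ω
    obtain ⟨i, j, hne, hequ⟩ := Finite.exists_ne_map_eq_of_infinite (fun n : ℕ => S^[n] ω)
    have hequ' : S^[i] ω = S^[j] ω := hequ
    have key : ∀ i j : ℕ, i < j → S^[i] ω = S^[j] ω → ∃ n, P (S^[n] ω) := by
      intro i j hij hequ2
      exact ⟨i, j - i, by omega, by
        rw [← Function.iterate_add_apply, Nat.sub_add_cancel hij.le, ← hequ2]⟩
    rcases lt_or_gt_of_ne hne with h | h
    · exact key i j h hequ'
    · exact key j i h hequ'.symm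
  -- minimal period
  obtain ⟨per, hper⟩ : ∃ per : Ω → ℕ,
      ∀ ω, P ω → (0 < per ω ∧ S^[per ω] ω = ω ∧ ∀ m, 0 < m → S^[m] ω = ω → per ω ≤ m) := by
    refine ⟨fun ω => if h : ∃ m, 0 < m ∧ S^[m] ω = ω then Nat.find h else 0, ?_⟩
    intro ω h
    have h' : ∃ m, 0 < m ∧ S^[m] ω = ω := h
    simp only [dif_pos h']
    obtain ⟨ha, hb2⟩ := Nat.find_spec h'
    exact ⟨ha, hb2, fun m hm hfix => Nat.find_le ⟨hm, hfix⟩⟩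
  have hdist : ∀ ω, P ω → ∀ i j, i < j → j < per ω → S^[i] ω ≠ S^[j] ω := by
    intro ω h i j hij hj hequ
    obtain ⟨hpos, hfix, hmin⟩ := hper ω h
    have h2 : S^[per ω - j + i] ω = ω := by
      have hh : S^[per ω - j] (S^[j] ω) = ω := by
        rw [← Function.iterate_add_apply, Nat.sub_add_cancel hj.le]; exact hfix
      rw [← hequ] at hh
      rw [Function.iterate_add_apply]; exact hh
    have := hmin _ (by omega) h2
    omega
  have hperS : ∀ ω, P ω → per (S ω) = per ω := by
    intro ω h
    obtain ⟨hpos, hfix, hmin⟩ := hper ω h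
    obtain ⟨hpos', hfix', hmin'⟩ := hper (S ω) (hPS ω h)
    have hup : S^[per ω] (S ω) = S ω := by
      rw [← Function.iterate_succ_apply, Function.iterate_succ_apply', hfix]
    have le1 : per (S ω) ≤ per ω := hmin' _ hpos hup
    have eA : S^[per (S ω) + per ω] ω = S^[per (S ω)] ω := by
      rw [Function.iterate_add_apply, hfix]
    have eB : S^[per (S ω) + per ω] ω = ω := by
      have hh : per (S ω) + per ω = (per ω - 1) + (per (S ω) + 1) := by omega
      rw [hh, Function.iterate_add_apply, Function.iterate_succ_apply, hfix',
        ← Function.iterate_succ_apply]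
      simp only [Nat.succ_eq_add_one]
      rw [Nat.sub_add_cancel hpos]
      exact hfix
    have h2 : S^[per (S ω)] ω = ω := by rw [← eA, eB]
    exact le_antisymm le1 (hmin _ hpos' h2)
  -- orbits and canonical representatives
  set orb : Ω → Finset Ω := fun ω => (Finset.range (per ω)).image (fun j => S^[j] ω)
    with horbdef
  have hmemorb : ∀ ω x, x ∈ orb ω ↔ ∃ j, j < per ω ∧ S^[j] ω = x := by
    intro ω x
    simp only [horbdef, Finset.mem_image, Finset.mem_range]
  have hselfmem : ∀ ω, P ω → ω ∈ orb ω := by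
    intro ω h
    exact (hmemorb ω ω).mpr ⟨0, (hper ω h).1, rfl⟩
  have horbS : ∀ ω, P ω → orb (S ω) = orb ω := by
    intro ω h
    obtain ⟨hpos, hfix, hmin⟩ := hper ω h
    apply Finset.ext
    intro x
    rw [hmemorb, hmemorb, hperS ω h]
    constructor
    · rintro ⟨j, hj, hx⟩
      rw [← Function.iterate_succ_apply] at hx
      simp only [Nat.succ_eq_add_one] at hx
      rcases Nat.lt_or_ge (j+1) (per ω) with hlt | hge
      · exact ⟨j+1, hlt, hx⟩
      · have hje : j + 1 = per ω := by omega
        rw [hje, hfix] at hx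
        exact ⟨0, hpos, hx⟩
    · rintro ⟨j, hj, hx⟩
      rcases j with _ | m
      · refine ⟨per ω - 1, by omega, ?_⟩
        rw [← Function.iterate_succ_apply]
        simp only [Nat.succ_eq_add_one]
        rw [Nat.sub_add_cancel hpos, hfix]
        simpa using hx
      · exact ⟨m, by omega, by rw [← Function.iterate_succ_apply]; exact hx⟩
  have horbiter : ∀ j ω, P ω → orb (S^[j] ω) = orb ω := by
    intro j
    induction j with
    | zero => intro ω h; simp
    | succ j ih =>
      intro ω h
      rw [Function.iterate_succ_apply, ih _ (hPS ω h), horbS ω h]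
  -- canonical representative of an orbit
  obtain ⟨c, hc⟩ : ∃ c : Ω → Ω, ∀ ω, P ω →
      P (c ω) ∧ c (S ω) = c ω ∧ ∃ j, j < per (c ω) ∧ S^[j] (c ω) = ω := by
    set c : Ω → Ω := fun ω => if h : ((orb ω).image e).Nonempty
      then e.symm (((orb ω).image e).min' h) else ω with hcdef
    have hcorb : ∀ ω, P ω → c ω ∈ orb ω := by
      intro ω h
      have hne : ((orb ω).image e).Nonempty :=
        Finset.Nonempty.image ⟨ω, hselfmem ω h⟩ e
      have hmem := Finset.min'_mem _ hne
      obtain ⟨x, hx, hex⟩ := Finset.mem_image.mp hmem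
      have : c ω = x := by
        rw [hcdef]; simp only [dif_pos hne, ← hex, Equiv.symm_apply_apply]
      rw [this]; exact hx
    have hcS : ∀ ω, P ω → c (S ω) = c ω := by
      intro ω h
      have hne : ((orb ω).image e).Nonempty :=
        Finset.Nonempty.image ⟨ω, hselfmem ω h⟩ e
      rw [hcdef]
      simp only [horbS ω h, dif_pos hne]
    refine ⟨c, ?_⟩
    intro ω h
    obtain ⟨j, hj, hjx⟩ := (hmemorb ω (c ω)).mp (hcorb ω h)
    have hcP : P (c ω) := by rw [← hjx]; exact hPiter j ω h
    refine ⟨hcP, hcS ω h, ?_⟩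
    have : ω ∈ orb (c ω) := by
      rw [← hjx, horbiter j ω h]
      exact hselfmem ω h
    exact (hmemorb (c ω) ω).mp this
  -- first hitting index within the cycle
  obtain ⟨idx, hidx⟩ : ∃ idx : Ω → ℕ, ∀ ω, P ω →
      S^[idx ω] (c ω) = ω ∧ idx ω < per (c ω) := by
    refine ⟨fun ω => if h : ∃ j, S^[j] (c ω) = ω then Nat.find h else 0, ?_⟩
    intro ω h
    obtain ⟨hcP, hcSe, j, hj, hjfix⟩ := hc ω h
    have hex : ∃ j, S^[j] (c ω) = ω := ⟨j, hjfix⟩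
    simp only [dif_pos hex]
    exact ⟨Nat.find_spec hex, lt_of_le_of_lt (Nat.find_le hjfix) hj⟩
  -- periodic points of T with prescribed itinerary
  have hXex : ∀ σ, ∃ x : ℝ, P σ → (T^[per σ] x = x ∧
      ∀ j, j ≤ per σ → T^[j] x ∈ Icc (A (e (S^[j] σ))) (B (e (S^[j] σ)))) := by
    intro σ
    by_cases h : P σ
    · obtain ⟨x, hx1, hx2⟩ := horse_per_pt T hTc hTm (per σ)
        (fun j => A (e (S^[j] σ))) (fun j => B (e (S^[j] σ))) (fun j => hab _)
        (fun j => h0 _) (fun j => h1 _) (fun j => hcov' _ _)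
        (by simp only [(hper σ h).2.1, Function.iterate_zero_apply])
        (by simp only [(hper σ h).2.1, Function.iterate_zero_apply])
      exact ⟨x, fun _ => ⟨hx1, hx2⟩⟩
    · exact ⟨0, fun hh => absurd hh h⟩
  choose X hX using hXex
  -- backward lifting
  have hLex : ∀ (ω : Ω) (y : ℝ), ∃ z : ℝ, y ∈ Icc (A (e (S ω))) (B (e (S ω))) →
      (z ∈ Icc (A (e ω)) (B (e ω)) ∧ T z = y) := by
    intro ω y
    by_cases h : y ∈ Icc (A (e (S ω))) (B (e (S ω)))
    · obtain ⟨z, hz, hTz⟩ := hcov' (e ω) (e (S ω)) h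
      exact ⟨z, fun _ => ⟨hz, hTz⟩⟩
    · exact ⟨0, fun hh => absurd hh h⟩
  choose L hL using hLex
  -- height above the periodic part
  obtain ⟨ht, hht⟩ : ∃ ht : Ω → ℕ, ∀ ω, P (S^[ht ω] ω) ∧ ∀ n, P (S^[n] ω) → ht ω ≤ n :=
    ⟨fun ω => Nat.find (hreach ω),
      fun ω => ⟨Nat.find_spec (hreach ω), fun n hn => Nat.find_le hn⟩⟩
  have hht0 : ∀ ω, P ω → ht ω = 0 := fun ω h =>
    Nat.le_zero.mp ((hht ω).2 0 (by simpa using h))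
  have hht0' : ∀ ω, ht ω = 0 → P ω := by
    intro ω h
    have hh := (hht ω).1
    rw [h] at hh; simpa using hh
  have hhtS : ∀ ω, ¬ P ω → ht ω = ht (S ω) + 1 := by
    intro ω h
    have hne : ht ω ≠ 0 := fun hh => h (hht0' ω hh)
    obtain ⟨m, hm⟩ : ∃ m, ht ω = m + 1 := ⟨ht ω - 1, by omega⟩
    have hPm : P (S^[m] (S ω)) := by
      have hh := (hht ω).1
      rw [hm, Function.iterate_succ_apply] at hh
      exact hh
    have le1 : ht (S ω) ≤ m := (hht (S ω)).2 m hPm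
    have le2 : ht ω ≤ ht (S ω) + 1 := by
      apply (hht ω).2
      rw [Function.iterate_succ_apply]
      exact (hht (S ω)).1
    omega
  -- the recursive construction
  obtain ⟨g, hg0, hgs⟩ : ∃ g : ℕ → Ω → ℝ,
      (∀ ω, g 0 ω = T^[idx ω] (X (c ω))) ∧
      (∀ n ω, g (n+1) ω = if P ω then T^[idx ω] (X (c ω)) else L ω (g n (S ω))) :=
    ⟨fun n => Nat.rec (fun ω => T^[idx ω] (X (c ω)))
      (fun _ gn ω => if P ω then T^[idx ω] (X (c ω)) else L ω (gn (S ω))) n,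
      fun ω => rfl, fun n ω => rfl⟩
  have hmemI : ∀ n ω, ht ω = n → g n ω ∈ Icc (A (e ω)) (B (e ω)) := by
    intro n
    induction n with
    | zero =>
      intro ω hω
      have hPω : P ω := hht0' ω hω
      obtain ⟨hcP, hcSe, _⟩ := hc ω hPω
      obtain ⟨hidx1, hidx2⟩ := hidx ω hPω
      rw [hg0 ω]
      have hh := (hX (c ω) hcP).2 (idx ω) hidx2.le
      rw [hidx1] at hh
      exact hh
    | succ n ih =>
      intro ω hω
      have hPω : ¬ P ω := fun h => by
        rw [hht0 ω h] at hω; exact Nat.succ_ne_zero n hω.symm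
      have hh1 := hhtS ω hPω
      have hh2 : ht (S ω) = n := by omega
      rw [hgs n ω, if_neg hPω]
      exact (hL ω (g n (S ω)) (ih (S ω) hh2)).1
  have hstab : ∀ n ω, ht ω ≤ n → g n ω = g (ht ω) ω := by
    intro n
    induction n with
    | zero => intro ω hω; rw [Nat.le_zero.mp hω]
    | succ n ih =>
      intro ω hω
      by_cases h : P ω
      · rw [hgs n ω, if_pos h, hht0 ω h, hg0 ω]
      · have hh1 := hhtS ω h
        have hh2 : ht (S ω) ≤ n := by omega
        rw [hgs n ω, if_neg h, ih (S ω) hh2, hh1, hgs (ht (S ω)) ω, if_neg h]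
  have hπmem : ∀ ω, g (ht ω) ω ∈ Icc (A (e ω)) (B (e ω)) := fun ω => hmemI (ht ω) ω rfl
  have hconj : ∀ ω, g (ht (S ω)) (S ω) = T (g (ht ω) ω) := by
    intro ω
    by_cases h : P ω
    · have hPS' : P (S ω) := hPS ω h
      obtain ⟨hcP, hcSe, _⟩ := hc ω h
      rw [hht0 ω h, hht0 (S ω) hPS', hg0, hg0, hcSe]
      obtain ⟨hi1, hi2⟩ := hidx ω h
      obtain ⟨hj1, hj2⟩ := hidx (S ω) hPS'
      rw [hcSe] at hj1 hj2
      obtain ⟨hXfix, hXit⟩ := hX (c ω) hcP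
      have hS1 : S^[idx ω + 1] (c ω) = S ω := by
        rw [Function.iterate_succ_apply', hi1]
      have hre : T (T^[idx ω] (X (c ω))) = T^[idx ω + 1] (X (c ω)) :=
        (Function.iterate_succ_apply' T (idx ω) (X (c ω))).symm
      rw [hre]
      rcases Nat.lt_or_ge (idx ω + 1) (per (c ω)) with hlt | hge
      · have heq2 : idx (S ω) = idx ω + 1 := by
          by_contra hne
          rcases Nat.lt_or_ge (idx (S ω)) (idx ω + 1) with hh | hh
          · exact hdist (c ω) hcP _ _ hh hlt (hj1.trans hS1.symm)
          · have hgt : idx ω + 1 < idx (S ω) := by omega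
            exact hdist (c ω) hcP _ _ hgt hj2 (hS1.trans hj1.symm)
        rw [heq2]
      · have hp : idx ω + 1 = per (c ω) := by omega
        have hSc : S ω = c ω := by rw [← hS1, hp, (hper (c ω) hcP).2.1]
        have hidx0 : idx (S ω) = 0 := by
          by_contra hne
          have h0lt : 0 < idx (S ω) := Nat.pos_of_ne_zero hne
          apply hdist (c ω) hcP 0 (idx (S ω)) h0lt hj2
          rw [Function.iterate_zero_apply, hj1, hSc]
        rw [hidx0, Function.iterate_zero_apply, hp, hXfix]
    · rw [hhtS ω h, hgs (ht (S ω)) ω, if_neg h]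
      exact ((hL ω (g (ht (S ω)) (S ω)) (hπmem (S ω))).2).symm
  refine ⟨fun ω => g (ht ω) ω, ?_, ?_, ?_⟩
  · intro ω ω' hequ
    by_contra hne
    have hequ' : g (ht ω) ω = g (ht ω') ω' := hequ
    have hne' : e ω ≠ e ω' := fun hh => hne (e.injective hh)
    have hd : Disjoint (I (e ω)) (I (e ω')) := hdisj hne'
    have hm1 : g (ht ω) ω ∈ I (e ω) := by rw [hIeq]; exact hπmem ω
    have hm2 : g (ht ω) ω ∈ I (e ω') := by rw [hIeq, hequ']; exact hπmem ω'
    exact (Set.disjoint_left.mp hd hm1) hm2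
  · intro ω
    have hh := hπmem ω
    exact ⟨(h0 (e ω)).trans hh.1, hh.2.trans (h1 (e ω))⟩
  · exact hconj
end
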